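/- arXiv:math/0602594 — 7 statements merged into one kernel-verified Lean document; each statement's English description precedes it below -/
import Mathlib

section
/- Let ξ be a random vector on a finite probability space with σ-algebra H ⊆ F, and suppose ξ takes values a.s. in a nonempty convex set W. If η is an H-measurable random vector with η(ω) ∈ ri(conv(support of the conditional distribution of ξ given H at ω)) a.s., then there exist a random variable δ > 0 and an H-measurable-conditioned modification such that E[δ | H] = 1 and E[δ ξ | H] = η a.s. -/
/-!
A point in the relative interior of the convex hull of finitely many values `ξ a`, `a ∈ A`, is a
convex combination of them with strictly positive weights: moving it slightly away from the
barycentre of the `ξ a` keeps it in the hull, and averaging that point back with the barycentre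
returns the original point with every weight positive. Choosing such weights `w` atom by atom
(as a function of the atom only, since `η` is constant on atoms), the density
`δ = P(atom) * w / P` does the job.
-/

open Finset Pointwise RealInnerProductSpace

noncomputable section

abbrev E (d : ℕ) : Type := EuclideanSpace ℝ (Fin d)

theorem exists_nonneg_weights_of_mem_convexHull_image {ι V : Type*} [AddCommGroup V] [Module ℝ V]
    {s : Finset ι} {f : ι → V} {x : V} (hx : x ∈ convexHull ℝ (f '' s)) :
    ∃ w : ι → ℝ, (∀ i ∈ s, 0 ≤ w i) ∧ ∑ i ∈ s, w i = 1 ∧ ∑ i ∈ s, w i • f i = x := by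
  classical
  suffices convexHull ℝ (f '' s) ⊆
      {x | ∃ w : ι → ℝ, (∀ i ∈ s, 0 ≤ w i) ∧ ∑ i ∈ s, w i = 1 ∧ ∑ i ∈ s, w i • f i = x} from this hx
  refine convexHull_min ?_ ?_
  · rintro _ ⟨i, hi, rfl⟩
    rw [mem_coe] at hi
    refine ⟨Pi.single i 1, fun j _ => ?_, by simp [hi], by simp [Pi.single_apply, hi]⟩
    exact (Pi.single_nonneg.2 zero_le_one : (0 : ι → ℝ) ≤ Pi.single i 1) j
  · rintro _ ⟨w, hw₀, hw₁, rfl⟩ _ ⟨v, hv₀, hv₁, rfl⟩ a b ha hb hab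
    refine ⟨a • w + b • v, fun i hi => ?_, ?_, ?_⟩ <;>
      simp only [Pi.add_apply, Pi.smul_apply, smul_eq_mul]
    · exact add_nonneg (mul_nonneg ha (hw₀ i hi)) (mul_nonneg hb (hv₀ i hi))
    · rw [sum_add_distrib, ← mul_sum, ← mul_sum, hw₁, hv₁, mul_one, mul_one, hab]
    · simp only [add_smul, mul_smul, sum_add_distrib, smul_sum]

theorem exists_pos_add_smul_sub_mem_of_mem_intrinsicInterior {V : Type*} [AddCommGroup V]
    [TopologicalSpace V] [IsTopologicalAddGroup V] [Module ℝ V] [ContinuousSMul ℝ V]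
    {s : Set V} {y b : V} (hy : y ∈ intrinsicInterior ℝ s) (hb : b ∈ s) :
    ∃ ε : ℝ, 0 < ε ∧ y + ε • (y - b) ∈ s := by
  obtain ⟨z, hz, rfl⟩ := hy
  have hdir : (z : V) - b ∈ (affineSpan ℝ s).direction :=
    AffineSubspace.vsub_mem_direction z.2 (subset_affineSpan ℝ s hb)
  let ray : ℝ → affineSpan ℝ s := fun t =>
    ⟨t • ((z : V) - b) +ᵥ (z : V), AffineSubspace.vadd_mem_of_mem_direction
      (Submodule.smul_mem _ t hdir) z.2⟩
  have hray : Continuous ray := by fun_prop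
  have h0 : ray 0 = z := by ext; simp [ray]
  have hnhds : ∀ᶠ t in nhdsWithin 0 (Set.Ioi 0), ray t ∈ interior ((↑) ⁻¹' s) :=
    nhdsWithin_le_nhds (hray.continuousAt.preimage_mem_nhds (h0 ▸ isOpen_interior.mem_nhds hz))
  obtain ⟨ε, hεs, hε⟩ := (hnhds.and self_mem_nhdsWithin).exists
  refine ⟨ε, hε, ?_⟩
  simpa [ray, vadd_eq_add, add_comm] using interior_subset hεs

theorem exists_pos_weights_of_mem_intrinsicInterior_convexHull_image {ι V : Type*}
    [AddCommGroup V] [TopologicalSpace V] [IsTopologicalAddGroup V] [Module ℝ V]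
    [ContinuousSMul ℝ V] {s : Finset ι} (hs : s.Nonempty) {f : ι → V} {y : V}
    (hy : y ∈ intrinsicInterior ℝ (convexHull ℝ (f '' s))) :
    ∃ w : ι → ℝ, (∀ i ∈ s, 0 < w i) ∧ ∑ i ∈ s, w i = 1 ∧ ∑ i ∈ s, w i • f i = y := by
  set c : ℝ := (#s : ℝ)⁻¹
  have hc : 0 < c := inv_pos.2 (Nat.cast_pos.2 hs.card_pos)
  have hc_sum : ∑ _i ∈ s, c = 1 := by
    rw [sum_const, nsmul_eq_mul]; exact mul_inv_cancel₀ (Nat.cast_pos.2 hs.card_pos).ne'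
  have hb : c • ∑ i ∈ s, f i ∈ convexHull ℝ (f '' s) := by
    rw [smul_sum]
    exact (convex_convexHull ℝ _).sum_mem (fun _ _ => hc.le) hc_sum
        fun i hi => subset_convexHull ℝ _ ⟨i, hi, rfl⟩
  obtain ⟨ε, hε, hz⟩ := exists_pos_add_smul_sub_mem_of_mem_intrinsicInterior hy hb
  obtain ⟨μ, hμ₀, hμ₁, hμz⟩ := exists_nonneg_weights_of_mem_convexHull_image hz
  -- `y = (1 + ε)⁻¹ • (z + ε • b)` for the point `z` just found and the barycentre `b`
  have hε₁ : (1 + ε) ≠ 0 := by positivity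
  refine ⟨fun i => (1 + ε)⁻¹ * (μ i + ε * c), fun i hi => ?_, ?_, ?_⟩
  · have := hμ₀ i hi
    positivity
  · rw [← mul_sum, sum_add_distrib, ← mul_sum, hμ₁, hc_sum, mul_one, inv_mul_cancel₀ hε₁]
  · simp only [mul_smul, add_smul, sum_add_distrib, ← smul_sum, hμz]
    rw [show y + ε • (y - c • ∑ i ∈ s, f i) + ε • c • ∑ i ∈ s, f i = (1 + ε) • y by module,
      inv_smul_smul₀ hε₁]

theorem exists_choice_constant_on_fibers {α β γ : Type*} (q : α → β) {p : α → γ → Prop}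
    (hp : ∀ a a', q a = q a' → p a = p a') (h : ∀ a, ∃ c, p a c) :
    ∃ g : α → γ, (∀ a, p a (g a)) ∧ ∀ a a', q a = q a' → g a = g a' := by
  choose c hc using h
  refine ⟨fun a => haveI : Nonempty α := ⟨a⟩; c (Function.invFun q (q a)), fun a => ?_,
    fun a a' h => by simp only [h]⟩
  have : Nonempty α := ⟨a⟩
  exact hp _ _ (Function.invFun_eq ⟨a, rfl⟩) ▸ hc _

theorem martingale_selection_step_general {Ω : Type} {d : ℕ}
    (P : Ω → ℝ) (hP : ∀ ω, 0 < P ω)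
    (atom : Ω → Finset Ω)
    (hmem : ∀ ω, ω ∈ atom ω)
    (hpart : ∀ ω ω', ω' ∈ atom ω → atom ω' = atom ω)
    (ξ : Ω → E d)
    (η : Ω → E d) (hηmeas : ∀ ω ω', ω' ∈ atom ω → η ω' = η ω)
    (hηri : ∀ ω, η ω ∈ intrinsicInterior ℝ (convexHull ℝ (ξ '' (atom ω : Set Ω)))) :
    ∃ δ : Ω → ℝ, (∀ ω, 0 < δ ω) ∧
      (∀ ω, (∑ ω' ∈ atom ω, P ω')⁻¹ * ∑ ω' ∈ atom ω, P ω' * δ ω' = 1) ∧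
      (∀ ω, (∑ ω' ∈ atom ω, P ω')⁻¹ • ∑ ω' ∈ atom ω, (P ω' * δ ω') • ξ ω' = η ω) := by
  obtain ⟨w, hw, hw_atom⟩ := exists_choice_constant_on_fibers atom
    (p := fun ω (v : Ω → ℝ) => (∀ a ∈ atom ω, 0 < v a) ∧ ∑ a ∈ atom ω, v a = 1 ∧
      ∑ a ∈ atom ω, v a • ξ a = η ω)
    (fun ω ω' h => by rw [h, hηmeas ω ω' (h ▸ hmem ω')])
    fun ω => exists_pos_weights_of_mem_intrinsicInterior_convexHull_image ⟨ω, hmem ω⟩ (hηri ω)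
  have hS : ∀ ω, 0 < ∑ a ∈ atom ω, P a := fun ω => sum_pos (fun a _ => hP a) ⟨ω, hmem ω⟩
  have hPδ : ∀ ω, ∀ ω' ∈ atom ω,
      P ω' * ((∑ a ∈ atom ω', P a) * w ω' ω' / P ω') = (∑ a ∈ atom ω, P a) * w ω ω' := by
    intro ω ω' h
    rw [mul_div_cancel₀ _ (hP ω').ne', hpart ω ω' h, hw_atom ω' ω (hpart ω ω' h)]
  refine ⟨fun ω => (∑ a ∈ atom ω, P a) * w ω ω / P ω, fun ω => ?_, fun ω => ?_, fun ω => ?_⟩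
  · exact div_pos (mul_pos (hS ω) ((hw ω).1 ω (hmem ω))) (hP ω)
  · rw [sum_congr rfl (hPδ ω), ← mul_sum, (hw ω).2.1, mul_one, inv_mul_cancel₀ (hS ω).ne']
  · have hsum : ∀ ω' ∈ atom ω, (P ω' * ((∑ a ∈ atom ω', P a) * w ω' ω' / P ω')) • ξ ω' =
        (∑ a ∈ atom ω, P a) • w ω ω' • ξ ω' := fun ω' h => by rw [hPδ ω ω' h, mul_smul]
    rw [sum_congr rfl hsum, ← smul_sum, (hw ω).2.2, inv_smul_smul₀ (hS ω).ne']

/-- On a finite probability space, if η is H-measurable with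
η(ω) ∈ ri(conv(support of conditional distribution of ξ given H)) a.s., where ξ takes
values in a nonempty convex set W, then there is δ > 0 with E[δ|H] = 1 and E[δξ|H] = η. -/
theorem martingale_selection_step {Ω : Type} [Fintype Ω] [DecidableEq Ω] {d : ℕ}
    (P : Ω → ℝ) (hP : ∀ ω, 0 < P ω) (hP1 : ∑ ω, P ω = 1)
    (atom : Ω → Finset Ω)
    (hmem : ∀ ω, ω ∈ atom ω)
    (hpart : ∀ ω ω', ω' ∈ atom ω → atom ω' = atom ω)
    (W : Set (E d)) (hWne : W.Nonempty) (hWconv : Convex ℝ W)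
    (ξ : Ω → E d) (hξW : ∀ ω, ξ ω ∈ W)
    (η : Ω → E d) (hηmeas : ∀ ω ω', ω' ∈ atom ω → η ω' = η ω)
    (hηri : ∀ ω, η ω ∈ intrinsicInterior ℝ (convexHull ℝ (ξ '' (atom ω : Set Ω)))) :
    ∃ δ : Ω → ℝ, (∀ ω, 0 < δ ω) ∧
      (∀ ω, (∑ ω' ∈ atom ω, P ω')⁻¹ * ∑ ω' ∈ atom ω, P ω' * δ ω' = 1) ∧
      (∀ ω, (∑ ω' ∈ atom ω, P ω')⁻¹ • ∑ ω' ∈ atom ω, (P ω' * δ ω') • ξ ω' = η ω) :=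
  martingale_selection_step_general P hP atom hmem hpart ξ η hηmeas hηri
end
end

section
/- With notation as in the martingale selection theorem on a finite probability space: if ξ is any martingale selector of V under some measure Q equivalent to P (ξ_t ∈ V_t a.s., ξ a Q-martingale), then ξ_t(ω) ∈ W_t(ω) for all t and ω, where W_T = cl V_T and W_t = cl(V_t ∩ ri(conv K(W_{t+1}, F_t))). -/
/-!
By backward induction, `ξ t ω` lies in the relative interior of `W t ω`. The martingale property
writes `ξ t ω` as a convex combination with positive weights of the values `ξ (t + 1) ω'` on the
atom of `ω`, each in the relative interior of `W (t + 1) ω'`, and such a combination lies in the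
relative interior of the convex hull of the union. Relative interiors are preserved by finite
intersections and pass to the closure, which gives the claim for `W t ω`.
-/

open Finset Pointwise RealInnerProductSpace

noncomputable section

section RelativeBall

variable {F : Type*} [NormedAddCommGroup F] [NormedSpace ℝ F] {s t : Set F} {x y : F}

theorem mem_intrinsicInterior_iff_add_mem :
    x ∈ intrinsicInterior ℝ s ↔ x ∈ s ∧ ∃ ε > 0, ∀ w ∈ vectorSpan ℝ s, ‖w‖ < ε → x + w ∈ s := by
  constructor
  · rintro ⟨y, hy, rfl⟩
    obtain ⟨ε, hε, hball⟩ := Metric.mem_nhds_iff.1 (mem_interior_iff_mem_nhds.1 hy)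
    refine ⟨Set.mem_preimage.1 (interior_subset hy), ε, hε, fun w hw hwε => ?_⟩
    have hmem : (y : F) + w ∈ affineSpan ℝ s := by
      rw [add_comm, ← vadd_eq_add]
      exact AffineSubspace.vadd_mem_of_mem_direction (by rwa [direction_affineSpan]) y.2
    exact hball (show (⟨_, hmem⟩ : affineSpan ℝ s) ∈ Metric.ball y ε by
      simpa [Metric.mem_ball, Subtype.dist_eq] using hwε)
  · rintro ⟨hx, ε, hε, hball⟩
    refine ⟨⟨x, subset_affineSpan ℝ s hx⟩, ?_, rfl⟩
    refine mem_interior_iff_mem_nhds.2 (Metric.mem_nhds_iff.2 ⟨ε, hε, fun z hz => ?_⟩)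
    have hdir : (z : F) - x ∈ vectorSpan ℝ s := by
      rw [← direction_affineSpan, ← vsub_eq_sub]
      exact AffineSubspace.vsub_mem_direction z.2 (subset_affineSpan ℝ s hx)
    simpa using hball _ hdir
      (by simpa [Metric.mem_ball, Subtype.dist_eq, dist_eq_norm] using hz)

theorem exists_pos_add_smul_mem_of_mem_intrinsicInterior (hx : x ∈ intrinsicInterior ℝ s)
    {u : F} (hu : u ∈ vectorSpan ℝ s) : ∃ δ > (0 : ℝ), x + δ • u ∈ s := by
  obtain ⟨-, ε, hε, hball⟩ := mem_intrinsicInterior_iff_add_mem.1 hx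
  have hpos : 0 < ‖u‖ + 1 := by positivity
  refine ⟨ε / (‖u‖ + 1), by positivity, hball _ (Submodule.smul_mem _ _ hu) ?_⟩
  rw [norm_smul, Real.norm_of_nonneg (by positivity), div_mul_eq_mul_div, div_lt_iff₀ hpos]
  nlinarith

theorem intrinsicInterior_intrinsicInterior :
    intrinsicInterior ℝ (intrinsicInterior ℝ s) = intrinsicInterior ℝ s := by
  refine subset_antisymm intrinsicInterior_subset fun x hx => ?_
  obtain ⟨-, ε, hε, hball⟩ := mem_intrinsicInterior_iff_add_mem.1 hx
  have hspan : vectorSpan ℝ (intrinsicInterior ℝ s) ≤ vectorSpan ℝ s :=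
    vectorSpan_mono ℝ intrinsicInterior_subset
  refine mem_intrinsicInterior_iff_add_mem.2 ⟨hx, ε / 2, half_pos hε, fun w hw hwε => ?_⟩
  refine mem_intrinsicInterior_iff_add_mem.2
    ⟨hball w (hspan hw) (by linarith), ε / 2, half_pos hε, fun w' hw' hw'ε => ?_⟩
  rw [add_assoc]
  exact hball _ (add_mem (hspan hw) hw') ((norm_add_le _ _).trans_lt (by linarith))

theorem intrinsicInterior_inter_subset :
    intrinsicInterior ℝ s ∩ intrinsicInterior ℝ t ⊆ intrinsicInterior ℝ (s ∩ t) := by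
  rintro x ⟨hs, ht⟩
  obtain ⟨hxs, εs, hεs, hballs⟩ := mem_intrinsicInterior_iff_add_mem.1 hs
  obtain ⟨hxt, εt, hεt, hballt⟩ := mem_intrinsicInterior_iff_add_mem.1 ht
  refine mem_intrinsicInterior_iff_add_mem.2
    ⟨⟨hxs, hxt⟩, min εs εt, lt_min hεs hεt, fun w hw hwε => ⟨?_, ?_⟩⟩
  · exact hballs w (vectorSpan_mono ℝ Set.inter_subset_left hw) (hwε.trans_le (min_le_left _ _))
  · exact hballt w (vectorSpan_mono ℝ Set.inter_subset_right hw) (hwε.trans_le (min_le_right _ _))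

theorem vectorSpan_closure [FiniteDimensional ℝ F] (s : Set F) :
    vectorSpan ℝ (closure s) = vectorSpan ℝ s := by
  refine le_antisymm ?_ (vectorSpan_mono ℝ subset_closure)
  rw [← direction_affineSpan, ← direction_affineSpan]
  exact AffineSubspace.direction_le (affineSpan_le.2 (closure_minimal (subset_affineSpan ℝ s)
    (affineSpan ℝ s).closed_of_finiteDimensional))

theorem intrinsicInterior_subset_intrinsicInterior_closure [FiniteDimensional ℝ F] :
    intrinsicInterior ℝ s ⊆ intrinsicInterior ℝ (closure s) := by
  intro x hx
  obtain ⟨hxs, ε, hε, hball⟩ := mem_intrinsicInterior_iff_add_mem.1 hx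
  refine mem_intrinsicInterior_iff_add_mem.2 ⟨subset_closure hxs, ε, hε, fun w hw hwε => ?_⟩
  rw [vectorSpan_closure] at hw
  exact subset_closure (hball w hw hwε)

theorem Convex.openSegment_intrinsicInterior_self_subset_intrinsicInterior (hs : Convex ℝ s)
    (hx : x ∈ intrinsicInterior ℝ s) (hy : y ∈ s) : openSegment ℝ x y ⊆ intrinsicInterior ℝ s := by
  rintro _ ⟨a, b, ha, hb, hab, rfl⟩
  obtain ⟨hxs, ε, hε, hball⟩ := mem_intrinsicInterior_iff_add_mem.1 hx
  refine mem_intrinsicInterior_iff_add_mem.2 ⟨hs hxs hy ha.le hb.le hab, a * ε, by positivity,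
    fun w hw hwε => ?_⟩
  have hxw : x + a⁻¹ • w ∈ s := by
    refine hball _ (Submodule.smul_mem _ _ hw) ?_
    rw [norm_smul, Real.norm_of_nonneg (inv_nonneg.2 ha.le), inv_mul_lt_iff₀ ha]
    exact hwε
  convert hs hxw hy ha.le hb.le hab using 1
  rw [smul_add, smul_smul, mul_inv_cancel₀ ha.ne', one_smul]
  abel

end RelativeBall

section Radial

variable {F : Type*} [AddCommGroup F] [Module ℝ F] {s : Set F} {x u v : F}

theorem Convex.exists_pos_add_smul_add_mem (hs : Convex ℝ s) (hx : x ∈ s)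
    (hu : ∃ δ > (0 : ℝ), x + δ • u ∈ s) (hv : ∃ δ > (0 : ℝ), x + δ • v ∈ s) :
    ∃ δ > (0 : ℝ), x + δ • (u + v) ∈ s := by
  obtain ⟨δu, hδu, hu⟩ := hu
  obtain ⟨δv, hδv, hv⟩ := hv
  set δ := min δu δv
  have hδ : 0 < δ := lt_min hδu hδv
  have shrink : ∀ {w : F} {δw : ℝ}, 0 < δw → δ ≤ δw → x + δw • w ∈ s → x + δ • w ∈ s := by
    intro w δw hδw hle hw
    have := hs.add_smul_mem hx hw ⟨div_nonneg hδ.le hδw.le, (div_le_one hδw).2 hle⟩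
    rwa [smul_smul, div_mul_cancel₀ _ hδw.ne'] at this
  refine ⟨δ / 2, half_pos hδ, ?_⟩
  convert hs (shrink hδu (min_le_left _ _) hu) (shrink hδv (min_le_right _ _) hv)
    (by norm_num : (0 : ℝ) ≤ 1 / 2) (by norm_num : (0 : ℝ) ≤ 1 / 2) (by norm_num) using 1
  module

theorem exists_pos_add_smul_smul_mem {c : ℝ} (hc : 0 < c) (hu : ∃ δ > (0 : ℝ), x + δ • u ∈ s) :
    ∃ δ > (0 : ℝ), x + δ • (c • u) ∈ s := by
  obtain ⟨δ, hδ, hu⟩ := hu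
  exact ⟨δ / c, div_pos hδ hc, by rwa [smul_smul, div_mul_cancel₀ _ hc.ne']⟩

def Convex.radialSubmodule (hs : Convex ℝ s) (hx : x ∈ s) : Submodule ℝ F where
  carrier := {w | (∃ δ > (0 : ℝ), x + δ • w ∈ s) ∧ ∃ δ > (0 : ℝ), x + δ • -w ∈ s}
  zero_mem' := ⟨⟨1, one_pos, by simpa⟩, ⟨1, one_pos, by simpa⟩⟩
  add_mem' := fun ⟨hu, hu'⟩ ⟨hv, hv'⟩ =>
    ⟨hs.exists_pos_add_smul_add_mem hx hu hv,
      by simpa only [neg_add] using hs.exists_pos_add_smul_add_mem hx hu' hv'⟩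
  smul_mem' c w := by
    rintro ⟨hw, hw'⟩
    rcases lt_trichotomy c 0 with hc | rfl | hc
    · refine ⟨?_, ?_⟩
      · simpa [neg_smul] using exists_pos_add_smul_smul_mem (neg_pos.2 hc) hw'
      · simpa [neg_smul] using exists_pos_add_smul_smul_mem (neg_pos.2 hc) hw
    · exact ⟨⟨1, one_pos, by simpa⟩, ⟨1, one_pos, by simpa⟩⟩
    · exact ⟨exists_pos_add_smul_smul_mem hc hw, by
        simpa [smul_neg] using exists_pos_add_smul_smul_mem hc hw'⟩

end Radial

theorem Convex.mem_intrinsicInterior_of_vectorSpan_le_radialSubmodule {F : Type*}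
    [NormedAddCommGroup F] [NormedSpace ℝ F] [FiniteDimensional ℝ F] {s : Set F} {x : F}
    (hs : Convex ℝ s) (hx : x ∈ s) (h : vectorSpan ℝ s ≤ hs.radialSubmodule hx) :
    x ∈ intrinsicInterior ℝ s := by
  -- `x` lies on the open segment from a relative interior point `p` to `x + δ • (x - p) ∈ s`.
  obtain ⟨p, hp⟩ := Set.Nonempty.intrinsicInterior hs ⟨x, hx⟩
  obtain ⟨⟨δ, hδ, hq⟩, -⟩ := h (vsub_mem_vectorSpan ℝ hx (intrinsicInterior_subset hp))
  refine hs.openSegment_intrinsicInterior_self_subset_intrinsicInterior hp hq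
    ⟨δ / (1 + δ), 1 / (1 + δ), by positivity, by positivity, by field_simp; ring, ?_⟩
  rw [vsub_eq_sub]
  match_scalars <;> field_simp
  ring

theorem Finset.centerMass_update {F ι : Type*} [AddCommGroup F] [Module ℝ F] [DecidableEq ι]
    {t : Finset ι} {k : ι} (hk : k ∈ t) (w : ι → ℝ) (z : ι → F) (v : F) :
    t.centerMass w (Function.update z k v) =
      t.centerMass w z + ((∑ i ∈ t, w i)⁻¹ * w k) • (v - z k) := by
  have hsummand : ∀ i, w i • Function.update z k v i =
      w i • z i + if i = k then w k • (v - z k) else 0 := by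
    intro i
    rcases eq_or_ne i k with rfl | hik
    · simp [smul_sub]
    · simp [hik]
  rw [centerMass, centerMass, sum_congr rfl fun i _ => hsummand i, sum_add_distrib,
    sum_ite_eq' t k, if_pos hk, smul_add, mul_smul]

theorem Finset.centerMass_mem_intrinsicInterior_convexHull_biUnion {F ι : Type*}
    [NormedAddCommGroup F] [NormedSpace ℝ F] [FiniteDimensional ℝ F]
    {t : Finset ι} {w : ι → ℝ} {C : ι → Set F} {z : ι → F}
    (ht : t.Nonempty) (hw : ∀ i ∈ t, 0 < w i) (hz : ∀ i ∈ t, z i ∈ intrinsicInterior ℝ (C i)) :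
    t.centerMass w z ∈ intrinsicInterior ℝ (convexHull ℝ (⋃ i ∈ t, C i)) := by
  classical
  set S := ⋃ i ∈ t, C i
  set D := convexHull ℝ S
  set c := t.centerMass w z
  have hD : Convex ℝ D := convex_convexHull ℝ S
  have hCD : ∀ i ∈ t, C i ⊆ D := fun i hi =>
    (Set.subset_biUnion_of_mem (u := C) hi).trans (subset_convexHull ℝ S)
  have hzD : ∀ i ∈ t, z i ∈ D := fun i hi => hCD i hi (intrinsicInterior_subset (hz i hi))
  have hwsum : 0 < ∑ i ∈ t, w i := sum_pos hw ht
  have hc : c ∈ D := hD.centerMass_mem (fun i hi => (hw i hi).le) hwsum hzD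
  have hweight : ∀ k ∈ t, 0 < (∑ i ∈ t, w i)⁻¹ * w k := fun k hk =>
    mul_pos (inv_pos.2 hwsum) (hw k hk)
  have hmove : ∀ k ∈ t, ∀ v ∈ D, c + ((∑ i ∈ t, w i)⁻¹ * w k) • (v - z k) ∈ D := by
    intro k hk v hv
    rw [← centerMass_update hk]
    refine hD.centerMass_mem (fun i hi => (hw i hi).le) hwsum fun i hi => ?_
    rcases eq_or_ne i k with rfl | hik
    · simpa using hv
    · simpa [hik] using hzD i hi
  have hdir : ∀ k ∈ t, vectorSpan ℝ (C k) ≤ hD.radialSubmodule hc := by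
    intro k hk u hu
    obtain ⟨δ, hδ, hδu⟩ := exists_pos_add_smul_mem_of_mem_intrinsicInterior (hz k hk) hu
    obtain ⟨δ', hδ', hδu'⟩ :=
      exists_pos_add_smul_mem_of_mem_intrinsicInterior (hz k hk) (neg_mem hu)
    refine ⟨⟨_, mul_pos (hweight k hk) hδ, ?_⟩, ⟨_, mul_pos (hweight k hk) hδ', ?_⟩⟩
    · simpa [mul_smul] using hmove k hk _ (hCD k hk hδu)
    · simpa [mul_smul] using hmove k hk _ (hCD k hk hδu')
  have hpt : ∀ k ∈ t, z k - c ∈ hD.radialSubmodule hc := fun k hk =>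
    ⟨⟨1, one_pos, by simpa using hzD k hk⟩,
      ⟨_, hweight k hk, by simpa using hmove k hk c hc⟩⟩
  -- A generator `a - b` of `vectorSpan ℝ S` splits into directions inside one `C i` and
  -- differences of the `z i - c`.
  refine hD.mem_intrinsicInterior_of_vectorSpan_le_radialSubmodule hc ?_
  rw [← direction_affineSpan, affineSpan_convexHull, direction_affineSpan, vectorSpan_def,
    Submodule.span_le]
  rintro _ ⟨a, ha, b, hb, rfl⟩
  obtain ⟨i, hi, ha⟩ := Set.mem_iUnion₂.1 ha
  obtain ⟨j, hj, hb⟩ := Set.mem_iUnion₂.1 hb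
  have hai := hdir i hi (vsub_mem_vectorSpan ℝ ha (intrinsicInterior_subset (hz i hi)))
  have hbj := hdir j hj (vsub_mem_vectorSpan ℝ hb (intrinsicInterior_subset (hz j hj)))
  have hsplit : a - b = (a - z i) + ((z i - c) - (z j - c)) - (b - z j) := by abel
  change a - b ∈ hD.radialSubmodule hc
  rw [hsplit]
  exact sub_mem (add_mem hai (sub_mem (hpt i hi) (hpt j hj))) hbj

theorem martingale_selector_mem_W_general {Ω : Type}
    {d : ℕ} (T : ℕ)
    (atom : ℕ → Ω → Finset Ω)
    (hmem : ∀ t ω, ω ∈ atom t ω)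
    (V : ℕ → Ω → Set (E d))
    (hVopen : ∀ t ω, intrinsicInterior ℝ (V t ω) = V t ω)
    (W : ℕ → Ω → Set (E d))
    (hWT : ∀ ω, W T ω = closure (V T ω))
    (hWt : ∀ t, t < T → ∀ ω, W t ω = closure (V t ω ∩
        intrinsicInterior ℝ (convexHull ℝ (⋃ ω' ∈ atom t ω, W (t + 1) ω'))))
    (ξ : ℕ → Ω → E d) (Q : Ω → ℝ)
    (hQpos : ∀ ω, 0 < Q ω)
    (hsel : ∀ t ω, t ≤ T → ξ t ω ∈ V t ω)
    (hmart : ∀ t ω, t < T →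
        (∑ ω' ∈ atom t ω, Q ω')⁻¹ • ∑ ω' ∈ atom t ω, Q ω' • ξ (t + 1) ω' = ξ t ω) :
    ∀ t ω, t ≤ T → ξ t ω ∈ W t ω := by
  have hV : ∀ t ω, t ≤ T → ξ t ω ∈ intrinsicInterior ℝ (V t ω) := fun t ω ht =>
    (hVopen t ω).symm ▸ hsel t ω ht
  have hri : ∀ t ≤ T, ∀ ω, ξ t ω ∈ intrinsicInterior ℝ (W t ω) := by
    intro t ht
    induction ht using Nat.decreasingInduction with
    | self =>
      intro ω
      rw [hWT]
      exact intrinsicInterior_subset_intrinsicInterior_closure (hV T ω le_rfl)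
    | of_succ t htT ih =>
      intro ω
      have hG : ξ t ω ∈ intrinsicInterior ℝ (convexHull ℝ (⋃ ω' ∈ atom t ω, W (t + 1) ω')) :=
        hmart t ω htT ▸ Finset.centerMass_mem_intrinsicInterior_convexHull_biUnion
          ⟨ω, hmem t ω⟩ (fun ω' _ => hQpos ω') (fun ω' _ => ih ω')
      rw [hWt t htT]
      refine intrinsicInterior_subset_intrinsicInterior_closure
        (intrinsicInterior_inter_subset ⟨hV t ω htT.le, ?_⟩)
      rwa [intrinsicInterior_intrinsicInterior]
  exact fun t ω ht => intrinsicInterior_subset (hri t ht ω)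

/-- Every martingale selector ξ of V (under any Q equivalent to P)
takes values in the recursively defined sets W_t. -/
theorem martingale_selector_mem_W {Ω : Type} [Fintype Ω] [DecidableEq Ω] [Nonempty Ω]
    {d : ℕ} (T : ℕ)
    (P : Ω → ℝ) (hP : ∀ ω, 0 < P ω) (hP1 : ∑ ω, P ω = 1)
    (atom : ℕ → Ω → Finset Ω)
    (hmem : ∀ t ω, ω ∈ atom t ω)
    (hpart : ∀ t ω ω', ω' ∈ atom t ω → atom t ω' = atom t ω)
    (hrefine : ∀ t ω, atom (t + 1) ω ⊆ atom t ω)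
    (h0 : ∀ ω, atom 0 ω = Finset.univ)
    (hT : ∀ ω, atom T ω = {ω})
    (V : ℕ → Ω → Set (E d))
    (hVne : ∀ t ω, (V t ω).Nonempty)
    (hVconv : ∀ t ω, Convex ℝ (V t ω))
    (hVopen : ∀ t ω, intrinsicInterior ℝ (V t ω) = V t ω)
    (hVadapted : ∀ t ω ω', ω' ∈ atom t ω → V t ω' = V t ω)
    (W : ℕ → Ω → Set (E d))
    (hWT : ∀ ω, W T ω = closure (V T ω))
    (hWt : ∀ t, t < T → ∀ ω, W t ω = closure (V t ω ∩
        intrinsicInterior ℝ (convexHull ℝ (⋃ ω' ∈ atom t ω, W (t + 1) ω'))))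
    (ξ : ℕ → Ω → E d) (Q : Ω → ℝ)
    (hQpos : ∀ ω, 0 < Q ω) (hQ1 : ∑ ω, Q ω = 1)
    (hadapted : ∀ t ω ω', t ≤ T → ω' ∈ atom t ω → ξ t ω' = ξ t ω)
    (hsel : ∀ t ω, t ≤ T → ξ t ω ∈ V t ω)
    (hmart : ∀ t ω, t < T →
        (∑ ω' ∈ atom t ω, Q ω')⁻¹ • ∑ ω' ∈ atom t ω, Q ω' • ξ (t + 1) ω' = ξ t ω) :
    ∀ t ω, t ≤ T → ξ t ω ∈ W t ω :=
  martingale_selector_mem_W_general T atom hmem V hVopen W hWT hWt ξ Q hQpos hsel hmart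
end
end

section
/- Let Y ∈ ℝ^d satisfy Y ∈ ri K* where K is the solvency cone of a bid-ask matrix Π (so Y_i > 0 and Y_j/Y_i ∈ ri[1/π^{ji}, π^{ij}] for all i,j). Then for every x ∈ K with x ∉ K ∩ (−K) one has ⟨x, Y⟩ > 0. -/
open Finset Pointwise RealInnerProductSpace

noncomputable section

def solvencyCone {d : ℕ} (π : Fin d → Fin d → ℝ) : Set (E d) :=
  {x | ∃ (a : Fin d → ℝ) (b : Fin d → Fin d → ℝ),
    (∀ i, 0 ≤ a i) ∧ (∀ i j, 0 ≤ b i j) ∧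
    x = ∑ i, a i • EuclideanSpace.single i (1 : ℝ) +
        ∑ i, ∑ j, b i j •
          (π i j • EuclideanSpace.single i (1 : ℝ) - EuclideanSpace.single j (1 : ℝ))}

def dualCone {d : ℕ} (K : Set (E d)) : Set (E d) :=
  {y | ∀ x ∈ K, 0 ≤ ⟪x, y⟫}

/-!
A point `Y` of the relative interior of `K*` can be pushed slightly beyond itself away from any
other point of `K*`, so a generator `g` of `K` with `⟪g, Y⟫ = 0` is orthogonal to all of `K*`,
in particular to the rows of `Π`, which lie in `K*` by the triangle inequality. Since
`π i i = 1` this rules out `g = e i`, and for `g = π i j • e i - e j` it forces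
`π i j * π j i = 1`, so that `-g = π i j • (π j i • e j - e i) ∈ K`. A conic combination `x` of
generators with `⟪x, Y⟫ = 0` only uses such generators, hence `-x ∈ K`.
-/

section IntrinsicInterior

variable {V : Type*} [NormedAddCommGroup V] [NormedSpace ℝ V] {S : Set V} {Y : V}

lemma exists_pos_smul_sub_add_mem_of_mem_intrinsicInterior (hY : Y ∈ intrinsicInterior ℝ S)
    {y : V} (hy : y ∈ S) : ∃ ε : ℝ, 0 < ε ∧ ε • (Y - y) + Y ∈ S := by
  obtain ⟨Y', hY', rfl⟩ := hY
  let line : ℝ → affineSpan ℝ S := fun t =>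
    ⟨t • ((Y' : V) - y) + Y', by
      simpa using AffineSubspace.smul_vsub_vadd_mem _ t Y'.2 (subset_affineSpan ℝ S hy) Y'.2⟩
  have hline : Continuous line := by fun_prop
  have hline0 : line 0 = Y' := by simp [line]
  have hnhds : ∀ᶠ t in nhds 0, line t ∈ interior ((↑) ⁻¹' S : Set (affineSpan ℝ S)) :=
    hline.continuousAt.preimage_mem_nhds (isOpen_interior.mem_nhds (hline0 ▸ hY'))
  obtain ⟨ε, hε, hεS⟩ := ((hnhds.filter_mono nhdsWithin_le_nhds).and
    (self_mem_nhdsWithin (s := Set.Ioi (0 : ℝ)))).exists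
  exact ⟨ε, hεS, interior_subset (s := ((↑) ⁻¹' S : Set (affineSpan ℝ S))) hε⟩

lemma eq_zero_of_mem_intrinsicInterior {f : V →ₗ[ℝ] ℝ} (hf : ∀ y ∈ S, 0 ≤ f y)
    (hY : Y ∈ intrinsicInterior ℝ S) (hfY : f Y = 0) {y : V} (hy : y ∈ S) : f y = 0 := by
  obtain ⟨ε, hε, hεS⟩ := exists_pos_smul_sub_add_mem_of_mem_intrinsicInterior hY hy
  have := hf _ hεS
  simp only [map_add, map_smul, map_sub, hfY, smul_eq_mul] at this
  nlinarith [hf y hy]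

end IntrinsicInterior

namespace PointedCone

variable {V : Type*} [NormedAddCommGroup V] [InnerProductSpace ℝ V] {s : Set V} {Y : V}

lemma inner_nonneg_of_mem_hull (hY : ∀ v ∈ s, 0 ≤ ⟪v, Y⟫) {x : V} (hx : x ∈ hull ℝ s) :
    0 ≤ ⟪x, Y⟫ := by
  induction hx using Submodule.span_induction with
  | mem v hv => exact hY v hv
  | zero => simp
  | add x y _ _ hx hy => rw [inner_add_left]; positivity
  | smul c x _ hx => rw [← Nonneg.coe_smul, real_inner_smul_left]; exact mul_nonneg c.2 hx

lemma neg_mem_hull_of_inner_eq_zero (hY : ∀ v ∈ s, 0 ≤ ⟪v, Y⟫)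
    (hs : ∀ v ∈ s, ⟪v, Y⟫ = 0 → -v ∈ hull ℝ s) {x : V} (hx : x ∈ hull ℝ s)
    (hxY : ⟪x, Y⟫ = 0) : -x ∈ hull ℝ s := by
  induction hx using Submodule.span_induction with
  | mem v hv => exact hs v hv hxY
  | zero => simp
  | add x y hx hy ihx ihy =>
    have hx0 := inner_nonneg_of_mem_hull hY hx
    have hy0 := inner_nonneg_of_mem_hull hY hy
    rw [inner_add_left] at hxY
    rw [neg_add]
    exact add_mem (ihx (by linarith)) (ihy (by linarith))
  | smul c x _ ihx =>
    rw [← Nonneg.coe_smul, real_inner_smul_left] at hxY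
    rw [← smul_neg]
    rcases mul_eq_zero.1 hxY with hc | hxY
    · rw [← Nonneg.coe_smul, hc, zero_smul]
      exact zero_mem _
    · exact Submodule.smul_mem _ c (ihx hxY)

end PointedCone

open PointedCone

section Solvency

variable {d : ℕ} {π : Fin d → Fin d → ℝ}

def solvencyGen (π : Fin d → Fin d → ℝ) : Fin d ⊕ Fin d × Fin d → E d
  | .inl i => EuclideanSpace.single i 1
  | .inr (i, j) => π i j • EuclideanSpace.single i 1 - EuclideanSpace.single j 1

lemma solvencyCone_eq_hull : solvencyCone π = hull ℝ (Set.range (solvencyGen π)) := by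
  ext x
  simp only [SetLike.mem_coe, Submodule.mem_span_range_iff_exists_fun, solvencyCone,
    Set.mem_ofPred_eq, Fintype.sum_sum_type, Fintype.sum_prod_type]
  constructor
  · rintro ⟨a, b, ha, hb, rfl⟩
    exact ⟨Sum.elim (fun i => ⟨a i, ha i⟩) (fun p => ⟨b p.1 p.2, hb _ _⟩), by
      simp [solvencyGen, Nonneg.mk_smul]⟩
  · rintro ⟨c, rfl⟩
    exact ⟨fun i => c (.inl i), fun i j => c (.inr (i, j)), fun i => (c _).2,
      fun _ _ => (c _).2, by simp [solvencyGen, Nonneg.coe_smul]⟩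

lemma mem_dualCone_hull_iff {s : Set (E d)} {y : E d} :
    y ∈ dualCone (hull ℝ s : Set (E d)) ↔ ∀ v ∈ s, 0 ≤ ⟪v, y⟫ :=
  ⟨fun hy v hv => hy v (subset_hull hv), fun hy _ hx => inner_nonneg_of_mem_hull hy hx⟩

def rowVec (π : Fin d → Fin d → ℝ) (c : Fin d) : E d := WithLp.toLp 2 (π c)

lemma inner_solvencyGen_rowVec_inl (i c : Fin d) :
    ⟪solvencyGen π (.inl i), rowVec π c⟫ = π c i := by
  simp [solvencyGen, rowVec, EuclideanSpace.inner_single_left]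

lemma inner_solvencyGen_rowVec_inr (i j c : Fin d) :
    ⟪solvencyGen π (.inr (i, j)), rowVec π c⟫ = π i j * π c i - π c j := by
  simp [solvencyGen, rowVec, inner_sub_left, real_inner_smul_left,
    EuclideanSpace.inner_single_left]

lemma rowVec_mem_dualCone (hpos : ∀ i j, 0 < π i j) (htri : ∀ i j k, π i j ≤ π i k * π k j)
    (c : Fin d) : rowVec π c ∈ dualCone (solvencyCone π) := by
  rw [solvencyCone_eq_hull, mem_dualCone_hull_iff]
  rintro _ ⟨i | ⟨i, j⟩, rfl⟩
  · rw [inner_solvencyGen_rowVec_inl]; exact (hpos c i).le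
  · rw [inner_solvencyGen_rowVec_inr]; linarith [htri c j i]

lemma neg_solvencyGen_mem_of_inner_eq_zero (hpos : ∀ i j, 0 < π i j) (hdiag : ∀ i, π i i = 1)
    (htri : ∀ i j k, π i j ≤ π i k * π k j) {Y : E d}
    (hY : Y ∈ intrinsicInterior ℝ (dualCone (solvencyCone π))) (k : Fin d ⊕ Fin d × Fin d)
    (hk : ⟪solvencyGen π k, Y⟫ = 0) : -solvencyGen π k ∈ hull ℝ (Set.range (solvencyGen π)) := by
  have hgen : solvencyGen π k ∈ solvencyCone π := solvencyCone_eq_hull ▸ subset_hull ⟨k, rfl⟩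
  have hrow (c : Fin d) : ⟪solvencyGen π k, rowVec π c⟫ = 0 :=
    eq_zero_of_mem_intrinsicInterior (S := dualCone (solvencyCone π))
      (f := innerₛₗ ℝ (solvencyGen π k)) (fun _ hy => hy _ hgen) hY hk
      (rowVec_mem_dualCone hpos htri c)
  rcases k with i | ⟨i, j⟩
  · have := hrow i
    rw [inner_solvencyGen_rowVec_inl, hdiag] at this
    exact absurd this one_ne_zero
  · have hij : π i j * π j i = 1 := by
      have := hrow j
      rw [inner_solvencyGen_rowVec_inr, hdiag] at this
      linarith
    have : -solvencyGen π (.inr (i, j)) = π i j • solvencyGen π (.inr (j, i)) := by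
      simp only [solvencyGen, smul_sub, smul_smul, hij, one_smul, neg_sub]
    rw [this]
    exact (hull ℝ _).smul_mem (hpos i j).le (subset_hull ⟨_, rfl⟩)

end Solvency

/-- If Y ∈ ri K*, then ⟨x, Y⟩ > 0 for every x ∈ K not lying in the
lineality space K ∩ (−K). -/
theorem ri_dual_strict_pos {d : ℕ} (π : Fin d → Fin d → ℝ)
    (hpos : ∀ i j, 0 < π i j) (hdiag : ∀ i, π i i = 1)
    (htri : ∀ i j k, π i j ≤ π i k * π k j)
    (Y : E d) (hY : Y ∈ intrinsicInterior ℝ (dualCone (solvencyCone π))) :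
    ∀ x ∈ solvencyCone π, x ∉ solvencyCone π ∩ -solvencyCone π → 0 < ⟪x, Y⟫ := by
  intro x hx hxlin
  have hYdual : Y ∈ dualCone (solvencyCone π) := intrinsicInterior_subset hY
  refine (hYdual x hx).lt_of_ne fun hxY => hxlin ⟨hx, ?_⟩
  rw [solvencyCone_eq_hull] at hx hYdual ⊢
  rw [mem_dualCone_hull_iff] at hYdual
  exact neg_mem_hull_of_inner_eq_zero hYdual
    (by rintro _ ⟨k, rfl⟩; exact neg_solvencyGen_mem_of_inner_eq_zero hpos hdiag htri hY k) hx
    hxY.symm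
end
end

section
/- In a one-period finite market with no constraints: let S_0 ∈ ℝ^d and S_1 a random vector on a finite probability space. There exists a probability measure Q equivalent to P with E_Q[S_1] = S_0 if and only if S_0 ∈ ri(conv{S_1(ω) : ω ∈ Ω}). -/
/-! Write `T w = ∑ ω, w ω • S₁ ω`, so that the hull is the image under `T` of the standard simplex.
The strictly positive weights form an open set, and `w ↦ (∑ ω, w ω, T w)` is a linear surjection
onto its range, hence an open map; pulling back along `y ↦ (1, y)` gives, around `T w` for positive
`w`, a neighbourhood in the affine span that lies in the hull. Conversely, if `S₀` is relatively
interior, the ray from the `P`-mean `T P` through `S₀` stays in the hull a little beyond `S₀`, at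
some `T μ`; then `S₀` is a convex combination of `T μ` and `T P` with positive weight on `T P`, so
all its weights are positive. -/

open Finset Pointwise RealInnerProductSpace

noncomputable section

section Weights

variable {R M ι : Type*} [Ring R] [AddCommGroup M] [Module R M] [Fintype ι]

theorem exists_sum_eq_one_of_mem_affineSpan_range {v : ι → M} {x : M}
    (hx : x ∈ affineSpan R (Set.range v)) :
    ∃ w : ι → R, ∑ i, w i = 1 ∧ Fintype.linearCombination R v w = x := by
  obtain ⟨w, hw1, rfl⟩ := eq_affineCombination_of_mem_affineSpan_of_fintype hx
  exact ⟨w, hw1, by rw [Finset.affineCombination_eq_linear_combination _ _ _ hw1,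
    Fintype.linearCombination_apply]⟩

def homogenizedCombination (v : ι → M) : (ι → R) →ₗ[R] R × M :=
  Fintype.linearCombination R fun i => (1, v i)

theorem homogenizedCombination_apply (v : ι → M) (w : ι → R) :
    homogenizedCombination v w = (∑ i, w i, Fintype.linearCombination R v w) := by
  ext <;> simp [homogenizedCombination, Fintype.linearCombination_apply, Prod.fst_sum,
    Prod.snd_sum]

end Weights

section ConvexHull

variable {𝕜 M ι : Type*} [Field 𝕜] [LinearOrder 𝕜] [IsStrictOrderedRing 𝕜] [AddCommGroup M]
  [Module 𝕜 M] [Fintype ι]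

theorem convexHull_range_eq_image_stdSimplex (v : ι → M) :
    convexHull 𝕜 (Set.range v) = Fintype.linearCombination 𝕜 v '' stdSimplex 𝕜 ι := by
  classical
  rw [← convexHull_rangle_single_eq_stdSimplex, LinearMap.image_convexHull, ← Set.range_comp]
  congr 1
  ext i
  simp [Fintype.linearCombination_apply_single]

theorem linearCombination_mem_convexHull_range (v : ι → M) {w : ι → 𝕜} (hw0 : ∀ i, 0 ≤ w i)
    (hw1 : ∑ i, w i = 1) : Fintype.linearCombination 𝕜 v w ∈ convexHull 𝕜 (Set.range v) := by
  rw [convexHull_range_eq_image_stdSimplex]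
  exact ⟨w, ⟨hw0, hw1⟩, rfl⟩

end ConvexHull

section IntrinsicInterior

variable {ι V : Type*} [Fintype ι] [NormedAddCommGroup V] [NormedSpace ℝ V]

theorem linearCombination_mem_intrinsicInterior_convexHull (v : ι → V) {w : ι → ℝ}
    (hw : ∀ i, 0 < w i) (hw1 : ∑ i, w i = 1) :
    Fintype.linearCombination ℝ v w ∈ intrinsicInterior ℝ (convexHull ℝ (Set.range v)) := by
  let G : (ι → ℝ) →ₗ[ℝ] ℝ × V := homogenizedCombination v
  have hlift (y : affineSpan ℝ (convexHull ℝ (Set.range v))) :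
      ((1 : ℝ), (y : V)) ∈ LinearMap.range G := by
    have hy : (y : V) ∈ affineSpan ℝ (Set.range v) := by
      rw [← affineSpan_convexHull (𝕜 := ℝ)]; exact y.2
    obtain ⟨w', hw'1, hw'⟩ := exists_sum_eq_one_of_mem_affineSpan_range hy
    exact ⟨w', by rw [homogenizedCombination_apply, hw'1, hw']⟩
  let lift : affineSpan ℝ (convexHull ℝ (Set.range v)) → LinearMap.range G :=
    fun y => ⟨(1, y), hlift y⟩
  let positive : Set (ι → ℝ) := {w' | ∀ i, 0 < w' i}
  have hopen : IsOpen (lift ⁻¹' (G.rangeRestrict '' positive)) := by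
    refine IsOpen.preimage (by fun_prop) <|
      G.rangeRestrict.isOpenMap_of_finiteDimensional G.surjective_rangeRestrict _ ?_
    simpa only [positive, Set.ofPred_forall] using
      isOpen_iInter_of_finite fun i => isOpen_lt continuous_const (continuous_apply i)
  refine ⟨⟨_, subset_affineSpan ℝ _ <|
    linearCombination_mem_convexHull_range v (fun i => (hw i).le) hw1⟩, ?_, rfl⟩
  refine mem_interior.2 ⟨_, ?_, hopen, w, hw, Subtype.ext ?_⟩
  · rintro y ⟨w', hw', hw'y⟩
    simp only [LinearMap.codRestrict_apply, G, lift, homogenizedCombination_apply,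
      Subtype.ext_iff, Prod.mk.injEq] at hw'y
    rw [Set.mem_preimage, ← hw'y.2]
    exact linearCombination_mem_convexHull_range v (fun i => (hw' i).le) hw'y.1
  · simp [G, lift, homogenizedCombination_apply, hw1]

theorem exists_lineMap_mem_of_mem_intrinsicInterior {s : Set V} {x b : V}
    (hx : x ∈ intrinsicInterior ℝ s) (hb : b ∈ affineSpan ℝ s) :
    ∃ t : ℝ, 1 < t ∧ AffineMap.lineMap b x t ∈ s := by
  obtain ⟨y, hy, rfl⟩ := hx
  let ray : ℝ → affineSpan ℝ s :=
    fun t => ⟨AffineMap.lineMap b y t, AffineMap.lineMap_mem t hb y.2⟩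
  have hray : Continuous ray := by fun_prop
  have hray1 : ray 1 = y := Subtype.ext (AffineMap.lineMap_apply_one _ _)
  have hnhds : ∀ᶠ t in nhds (1 : ℝ), ray t ∈ interior ((↑) ⁻¹' s) :=
    hray.continuousAt.preimage_mem_nhds (hray1 ▸ isOpen_interior.mem_nhds hy)
  obtain ⟨t, ht, ht1⟩ := ((hnhds.filter_mono nhdsWithin_le_nhds).and
    (self_mem_nhdsWithin (s := Set.Ioi (1 : ℝ)))).exists
  exact ⟨t, ht1, interior_subset (s := ((↑) : affineSpan ℝ s → V) ⁻¹' s) ht⟩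

theorem exists_pos_weights_of_mem_intrinsicInterior_convexHull (v : ι → V) {x : V}
    (hx : x ∈ intrinsicInterior ℝ (convexHull ℝ (Set.range v))) {p : ι → ℝ}
    (hp : ∀ i, 0 < p i) (hp1 : ∑ i, p i = 1) :
    ∃ w : ι → ℝ, (∀ i, 0 < w i) ∧ ∑ i, w i = 1 ∧ Fintype.linearCombination ℝ v w = x := by
  obtain ⟨t, ht, hz⟩ := exists_lineMap_mem_of_mem_intrinsicInterior hx <| subset_affineSpan ℝ _ <|
    linearCombination_mem_convexHull_range v (fun i => (hp i).le) hp1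
  rw [convexHull_range_eq_image_stdSimplex] at hz
  obtain ⟨μ, ⟨hμ0, hμ1⟩, hμ⟩ := hz
  have ht' : t⁻¹ < 1 := inv_lt_one_of_one_lt₀ ht
  refine ⟨t⁻¹ • μ + (1 - t⁻¹) • p, fun i => ?_, ?_, ?_⟩
  · exact add_pos_of_nonneg_of_pos (mul_nonneg (inv_nonneg.2 (by linarith)) (hμ0 i))
      (mul_pos (sub_pos.2 ht') (hp i))
  · simp [Finset.sum_add_distrib, ← Finset.mul_sum, hμ1, hp1]
  · rw [map_add, map_smul, map_smul, hμ, AffineMap.lineMap_apply_module]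
    have : t ≠ 0 := by positivity
    match_scalars <;> field_simp; ring

end IntrinsicInterior

theorem one_period_emm_iff_general {Ω : Type} [Fintype Ω] {d : ℕ}
    (P : Ω → ℝ) (hP : ∀ ω, 0 < P ω) (hP1 : ∑ ω, P ω = 1)
    (S₀ : E d) (S₁ : Ω → E d) :
    (∃ Q : Ω → ℝ, (∀ ω, 0 < Q ω) ∧ (∑ ω, Q ω = 1) ∧ ∑ ω, Q ω • S₁ ω = S₀)
      ↔ S₀ ∈ intrinsicInterior ℝ (convexHull ℝ (Set.range S₁)) := by
  simp only [← Fintype.linearCombination_apply ℝ]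
  constructor
  · rintro ⟨Q, hQ, hQ1, rfl⟩
    exact linearCombination_mem_intrinsicInterior_convexHull S₁ hQ hQ1
  · intro hS₀
    exact exists_pos_weights_of_mem_intrinsicInterior_convexHull S₁ hS₀ hP hP1

/-- there is Q equivalent to P with E_Q[S_1] = S_0 iff
S_0 ∈ ri(conv{S_1(ω) : ω ∈ Ω}). -/
theorem one_period_emm_iff {Ω : Type} [Fintype Ω] [Nonempty Ω] {d : ℕ}
    (P : Ω → ℝ) (hP : ∀ ω, 0 < P ω) (hP1 : ∑ ω, P ω = 1)
    (S₀ : E d) (S₁ : Ω → E d) :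
    (∃ Q : Ω → ℝ, (∀ ω, 0 < Q ω) ∧ (∑ ω, Q ω = 1) ∧ ∑ ω, Q ω • S₁ ω = S₀)
      ↔ S₀ ∈ intrinsicInterior ℝ (convexHull ℝ (Set.range S₁)) :=
  one_period_emm_iff_general P hP hP1 S₀ S₁
end
end

section
/- One-period duality for the lower price: under the assumptions of the previous statement, the lower price π̲ = sup{x ∈ ℝ : ∃ γ ∈ ℝ^d, x − ⟨γ, S_1 − S_0⟩ ≤ f a.s.} equals inf{y : (S_0, y) ∈ ri(conv{(S_1(ω), f(ω)) : ω ∈ Ω})}, and moreover π̲ ≤ π̄ with the set of arbitrage-free prices of f equal to {y : (S_0, y) ∈ ri(conv{(S_1(ω), f(ω))})}. -/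
open Finset Pointwise RealInnerProductSpace

noncomputable section

/-!
A point of the polytope `conv{v i}` lies in its relative interior iff it is a combination of the
`v i` with strictly positive weights. Applied to `K = conv{(S₁ ω, f ω)}` this identifies the
arbitrage-free prices with the `y` such that `(S₀, y) ∈ ri K`; every sub-hedging price lies below
each of them because hedging gains have mean zero under a martingale measure. Conversely, if `y`
lies below the infimum of the arbitrage-free prices, then `(S₀, y) ∉ K` (mixing it with a point of
`ri K` would give a smaller arbitrage-free price). Averaging against a martingale measure shows that
a hyperplane separating `(S₀, y)` from `K` is not vertical; normalised to have last coordinate `1`,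
its normal is a sub-hedging strategy for `y`.
-/

open Set Filter Topology

section ConvexHullRange

variable {ι V : Type*} [Fintype ι] [AddCommGroup V] [Module ℝ V]

theorem mem_convexHull_range_iff {v : ι → V} {x : V} :
    x ∈ convexHull ℝ (range v) ↔
      ∃ w : ι → ℝ, (∀ i, 0 ≤ w i) ∧ ∑ i, w i = 1 ∧ ∑ i, w i • v i = x := by
  classical
  refine ⟨fun hx => ?_, fun ⟨w, hw0, hw1, hx⟩ =>
    mem_convexHull_of_exists_fintype w v hw0 hw1 (mem_range_self ·) hx⟩
  have hv : range v = Fintype.linearCombination ℝ v '' range fun i => Pi.single i 1 := by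
    rw [← range_comp]
    congr 1
    funext i
    simp [Fintype.linearCombination_apply_single]
  rw [hv, ← LinearMap.image_convexHull, convexHull_rangle_single_eq_stdSimplex] at hx
  obtain ⟨w, ⟨hw0, hw1⟩, rfl⟩ := hx
  exact ⟨w, hw0, hw1, Fintype.linearCombination_apply ℝ v w⟩

theorem exists_linearMap_sum_eq_zero_sum_smul_eq [Nonempty ι] (v : ι → V) :
    ∃ r : vectorSpan ℝ (range v) →ₗ[ℝ] ι → ℝ,
      ∀ u, ∑ i, r u i = 0 ∧ ∑ i, r u i • v i = u := by
  classical
  let i₀ : ι := Classical.arbitrary ι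
  let T := Fintype.linearCombination ℝ fun i => v i - v i₀
  have hT : LinearMap.range T = vectorSpan ℝ (range v) := by
    rw [Fintype.range_linearCombination, vectorSpan_range_eq_span_range_vsub_right ℝ v i₀]
    rfl
  obtain ⟨s, hs⟩ := (T.codRestrict _ fun c => hT ▸ LinearMap.mem_range_self T c)
    |>.exists_rightInverse_of_surjective (by
      rw [LinearMap.range_eq_top]
      rintro ⟨u, hu⟩
      obtain ⟨c, rfl⟩ := hT ▸ hu
      exact ⟨c, rfl⟩)
  -- coefficients `c` of the `v i - v i₀` become the balanced weights `c - (∑ c) • e i₀` of the `v i`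
  let balance : (ι → ℝ) →ₗ[ℝ] ι → ℝ :=
    LinearMap.id - (∑ i, LinearMap.proj i).smulRight (Pi.single i₀ 1)
  refine ⟨balance ∘ₗ s, fun u => ⟨?_, ?_⟩⟩
  · simp [balance, Pi.single_apply]
  · have hsu : T (s u) = u := congr_arg Subtype.val (LinearMap.congr_fun hs u)
    rw [← hsu]
    simp [balance, T, Fintype.linearCombination_apply, sub_smul, smul_sub, Finset.sum_sub_distrib,
      Finset.sum_smul, Pi.single_apply]

variable [TopologicalSpace V] [IsTopologicalAddGroup V] [ContinuousSMul ℝ V]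

theorem sum_smul_mem_intrinsicInterior_convexHull_range [T2Space V] [Nonempty ι] {v : ι → V}
    {Q : ι → ℝ} (hQ : ∀ i, 0 < Q i) (hQ1 : ∑ i, Q i = 1) :
    ∑ i, Q i • v i ∈ intrinsicInterior ℝ (convexHull ℝ (range v)) := by
  set C := convexHull ℝ (range v)
  set x := ∑ i, Q i • v i
  obtain ⟨r, hr⟩ := exists_linearMap_sum_eq_zero_sum_smul_eq v
  have hxC : x ∈ C := mem_convexHull_range_iff.2 ⟨Q, fun i => (hQ i).le, hQ1, rfl⟩
  have hdir : (affineSpan ℝ C).direction = vectorSpan ℝ (range v) := by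
    rw [affineSpan_convexHull, direction_affineSpan]
  let g : affineSpan ℝ C → vectorSpan ℝ (range v) := fun y =>
    ⟨y - x, hdir ▸ AffineSubspace.vsub_mem_direction y.2 (subset_affineSpan ℝ C hxC)⟩
  have hg : Continuous fun y => Q + r (g y) :=
    continuous_const.add <| r.continuous_of_finiteDimensional.comp <|
      (continuous_subtype_val.sub continuous_const).subtype_mk _
  refine ⟨⟨x, subset_affineSpan ℝ C hxC⟩, mem_interior_iff_mem_nhds.2 ?_, rfl⟩
  -- `Q + r (g y)` are weights representing `y`; they depend continuously on `y` and equal `Q` at `x`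
  have hpos : ∀ᶠ y in 𝓝 ⟨x, subset_affineSpan ℝ C hxC⟩, ∀ i, 0 < (Q + r (g y)) i := by
    refine eventually_all.2 fun i =>
      continuous_const.continuousAt.eventually_lt ((continuous_apply i).comp hg).continuousAt ?_
    have hgx : g ⟨x, subset_affineSpan ℝ C hxC⟩ = 0 := Subtype.ext (sub_self x)
    simpa [hgx] using hQ i
  filter_upwards [hpos] with y hy
  refine mem_convexHull_range_iff.2 ⟨Q + r (g y), fun i => (hy i).le, ?_, ?_⟩
  · simp [Finset.sum_add_distrib, hQ1, (hr (g y)).1]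
  · simp [add_smul, Finset.sum_add_distrib, (hr (g y)).2, g, x]

theorem exists_pos_add_smul_sub_mem_of_mem_intrinsicInterior_s14 {s : Set V} {x b : V}
    (hx : x ∈ intrinsicInterior ℝ s) (hb : b ∈ affineSpan ℝ s) :
    ∃ δ : ℝ, 0 < δ ∧ x + δ • (x - b) ∈ s := by
  obtain ⟨⟨x, hxA⟩, hint, rfl⟩ := hx
  let p : ℝ → affineSpan ℝ s := fun δ => ⟨x + δ • (x - b), by
    simpa [add_comm] using AffineSubspace.vadd_mem_of_mem_direction
      (Submodule.smul_mem _ δ (AffineSubspace.vsub_mem_direction hxA hb)) hxA⟩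
  have hp : Continuous p :=
    (continuous_const.add (continuous_id.smul continuous_const)).subtype_mk _
  have hp0 : p 0 = ⟨x, hxA⟩ := by simp [p]
  have hps : ∀ᶠ δ in 𝓝 0, p δ ∈ (↑) ⁻¹' s :=
    hp.continuousAt.preimage_mem_nhds (by rw [hp0]; exact mem_interior_iff_mem_nhds.1 hint)
  obtain ⟨δ, hδs, hδ⟩ :=
    ((hps.filter_mono nhdsWithin_le_nhds).and (self_mem_nhdsWithin : Ioi (0 : ℝ) ∈ 𝓝[>] 0)).exists
  exact ⟨δ, hδ, hδs⟩

theorem mem_intrinsicInterior_convexHull_range_iff [T2Space V] [Nonempty ι] {v : ι → V} {x : V} :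
    x ∈ intrinsicInterior ℝ (convexHull ℝ (range v)) ↔
      ∃ Q : ι → ℝ, (∀ i, 0 < Q i) ∧ ∑ i, Q i = 1 ∧ ∑ i, Q i • v i = x := by
  refine ⟨fun hx => ?_, fun ⟨Q, hQ, hQ1, hx⟩ =>
    hx ▸ sum_smul_mem_intrinsicInterior_convexHull_range hQ hQ1⟩
  set n : ℝ := (Fintype.card ι : ℝ)
  have hn : 0 < n := Nat.cast_pos.2 Fintype.card_pos
  set b := ∑ i, n⁻¹ • v i
  have hb : b ∈ convexHull ℝ (range v) := mem_convexHull_range_iff.2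
    ⟨fun _ => n⁻¹, fun _ => by positivity, by simp [n, hn.ne'], rfl⟩
  obtain ⟨δ, hδ, hz⟩ := exists_pos_add_smul_sub_mem_of_mem_intrinsicInterior_s14 hx
    (subset_affineSpan ℝ _ hb)
  obtain ⟨w, hw0, hw1, hwz⟩ := mem_convexHull_range_iff.1 hz
  -- `x = (z + δ • b) / (1 + δ)` for `z = x + δ • (x - b) = ∑ i, w i • v i`
  refine ⟨fun i => (w i + δ * n⁻¹) / (1 + δ),
    fun i => div_pos (add_pos_of_nonneg_of_pos (hw0 i) (by positivity)) (by positivity), ?_, ?_⟩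
  · rw [← Finset.sum_div, Finset.sum_add_distrib, hw1, Finset.sum_const, Finset.card_univ,
      nsmul_eq_mul, div_eq_one_iff_eq (by positivity)]
    field_simp
    ring
  · calc ∑ i, ((w i + δ * n⁻¹) / (1 + δ)) • v i
        = (1 + δ)⁻¹ • (∑ i, w i • v i + δ • b) := by
          rw [Finset.smul_sum, ← Finset.sum_add_distrib, Finset.smul_sum]
          exact Finset.sum_congr rfl fun i _ => by module
      _ = x := by rw [hwz, inv_smul_eq_iff₀ (by positivity)]; module

theorem openSegment_subset_intrinsicInterior_convexHull_range [T2Space V] [Nonempty ι]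
    {v : ι → V} {x y : V} (hx : x ∈ convexHull ℝ (range v))
    (hy : y ∈ intrinsicInterior ℝ (convexHull ℝ (range v))) :
    openSegment ℝ x y ⊆ intrinsicInterior ℝ (convexHull ℝ (range v)) := by
  rintro _ ⟨a, b, ha, hb, hab, rfl⟩
  obtain ⟨w, hw0, hw1, rfl⟩ := mem_convexHull_range_iff.1 hx
  obtain ⟨Q, hQ, hQ1, rfl⟩ := mem_intrinsicInterior_convexHull_range_iff.1 hy
  refine mem_intrinsicInterior_convexHull_range_iff.2
    ⟨a • w + b • Q, fun i => by
      simpa using add_pos_of_nonneg_of_pos (mul_nonneg ha.le (hw0 i)) (mul_pos hb (hQ i)), ?_, ?_⟩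
  · simp [Finset.sum_add_distrib, ← Finset.mul_sum, hw1, hQ1, hab]
  · simp [add_smul, mul_smul, Finset.sum_add_distrib, Finset.smul_sum]

end ConvexHullRange

section OnePeriodMarket

variable {Ω V : Type*} [Fintype Ω] [NormedAddCommGroup V] [InnerProductSpace ℝ V]
  (S₀ : V) (S₁ : Ω → V) (f : Ω → ℝ)

def subhedgingPrices : Set ℝ := {x | ∃ γ : V, ∀ ω, x - ⟪γ, S₁ ω - S₀⟫ ≤ f ω}

def superhedgingPrices : Set ℝ := {x | ∃ γ : V, ∀ ω, f ω ≤ x + ⟪γ, S₁ ω - S₀⟫}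

def arbitrageFreePrices : Set ℝ :=
  {y | ∃ Q : Ω → ℝ, (∀ ω, 0 < Q ω) ∧ (∑ ω, Q ω = 1) ∧ (∑ ω, Q ω • S₁ ω = S₀) ∧
    ∑ ω, Q ω * f ω = y}

variable {S₀ S₁ f}

theorem sum_mul_inner_sub_eq_zero {Q : Ω → ℝ} (hQ1 : ∑ ω, Q ω = 1)
    (hQS : ∑ ω, Q ω • S₁ ω = S₀) (γ : V) : ∑ ω, Q ω * ⟪γ, S₁ ω - S₀⟫ = 0 := by
  simp_rw [← real_inner_smul_right, ← inner_sum, smul_sub, Finset.sum_sub_distrib, hQS,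
    ← Finset.sum_smul, hQ1, one_smul, sub_self, inner_zero_right]

theorem le_of_mem_subhedgingPrices_of_mem_arbitrageFreePrices {x y : ℝ}
    (hx : x ∈ subhedgingPrices S₀ S₁ f) (hy : y ∈ arbitrageFreePrices S₀ S₁ f) : x ≤ y := by
  obtain ⟨γ, hγ⟩ := hx
  obtain ⟨Q, hQ, hQ1, hQS, rfl⟩ := hy
  calc x = ∑ ω, Q ω * (x - ⟪γ, S₁ ω - S₀⟫) := by
        simp_rw [mul_sub, Finset.sum_sub_distrib, ← Finset.sum_mul, hQ1,
          sum_mul_inner_sub_eq_zero hQ1 hQS, one_mul, sub_zero]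
    _ ≤ ∑ ω, Q ω * f ω := by gcongr with ω; exacts [(hQ ω).le, hγ ω]

theorem le_of_mem_arbitrageFreePrices_of_mem_superhedgingPrices {x y : ℝ}
    (hy : y ∈ arbitrageFreePrices S₀ S₁ f) (hx : x ∈ superhedgingPrices S₀ S₁ f) : y ≤ x := by
  obtain ⟨γ, hγ⟩ := hx
  obtain ⟨Q, hQ, hQ1, hQS, rfl⟩ := hy
  calc ∑ ω, Q ω * f ω ≤ ∑ ω, Q ω * (x + ⟪γ, S₁ ω - S₀⟫) := by
        gcongr with ω; exacts [(hQ ω).le, hγ ω]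
    _ = x := by
        simp_rw [mul_add, Finset.sum_add_distrib, ← Finset.sum_mul, hQ1,
          sum_mul_inner_sub_eq_zero hQ1 hQS, one_mul, add_zero]

variable [Nonempty Ω]

theorem subhedgingPrices_nonempty : (subhedgingPrices S₀ S₁ f).Nonempty :=
  ⟨univ.inf' univ_nonempty f, 0, fun ω => by
    rw [inner_zero_left, sub_zero]; exact univ.inf'_le f (mem_univ ω)⟩

theorem superhedgingPrices_nonempty : (superhedgingPrices S₀ S₁ f).Nonempty :=
  ⟨univ.sup' univ_nonempty f, 0, fun ω => by
    rw [inner_zero_left, add_zero]; exact univ.le_sup' f (mem_univ ω)⟩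

theorem arbitrageFreePrices_eq :
    arbitrageFreePrices S₀ S₁ f =
      {y | (S₀, y) ∈ intrinsicInterior ℝ (convexHull ℝ (range fun ω => (S₁ ω, f ω)))} := by
  ext y
  simp only [arbitrageFreePrices, mem_ofPred_eq, mem_intrinsicInterior_convexHull_range_iff,
    Prod.ext_iff, Prod.fst_sum, Prod.snd_sum, Prod.smul_mk, smul_eq_mul]

theorem arbitrageFreePrices_nonempty
    (hNA : S₀ ∈ intrinsicInterior ℝ (convexHull ℝ (range S₁))) :
    (arbitrageFreePrices S₀ S₁ f).Nonempty :=
  let ⟨Q, hQ, hQ1, hQS⟩ := mem_intrinsicInterior_convexHull_range_iff.1 hNA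
  ⟨_, Q, hQ, hQ1, hQS, rfl⟩

theorem Ioo_subset_arbitrageFreePrices {y y₀ : ℝ}
    (hy : (S₀, y) ∈ convexHull ℝ (range fun ω => (S₁ ω, f ω)))
    (hy₀ : y₀ ∈ arbitrageFreePrices S₀ S₁ f) : Ioo y y₀ ⊆ arbitrageFreePrices S₀ S₁ f := by
  intro z hz
  rw [arbitrageFreePrices_eq] at hy₀ ⊢
  refine openSegment_subset_intrinsicInterior_convexHull_range hy hy₀ ?_
  rw [← Prod.image_mk_openSegment_right, openSegment_eq_Ioo (hz.1.trans hz.2)]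
  exact mem_image_of_mem _ hz

theorem mem_subhedgingPrices_of_notMem_convexHull [CompleteSpace V] {y y₀ : ℝ}
    (hy₀ : y₀ ∈ arbitrageFreePrices S₀ S₁ f) (hlt : y < y₀)
    (hy : (S₀, y) ∉ convexHull ℝ (range fun ω => (S₁ ω, f ω))) :
    y ∈ subhedgingPrices S₀ S₁ f := by
  obtain ⟨Q, hQ, hQ1, hQS, rfl⟩ := hy₀
  obtain ⟨φ, u, hφ, hu⟩ := geometric_hahn_banach_closed_point (convex_convexHull ℝ _)
    ((finite_range _).isCompact_convexHull ℝ).isClosed hy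
  set c := φ (0, 1)
  set w := (InnerProductSpace.toDual ℝ V).symm (φ.comp (.inl ℝ V ℝ))
  have hφ_apply (a : V) (t : ℝ) : φ (a, t) = ⟪w, a⟫ + t * c := by
    rw [InnerProductSpace.toDual_symm_apply, ContinuousLinearMap.comp_apply,
      ContinuousLinearMap.inl_apply, ← smul_eq_mul, ← map_smul, ← map_add, Prod.smul_mk,
      smul_zero, smul_eq_mul, mul_one, Prod.mk_add_mk, add_zero, zero_add]
  have hsep (ω : Ω) : ⟪w, S₁ ω - S₀⟫ < c * (y - f ω) := by
    have h := (hφ _ (subset_convexHull ℝ _ (mem_range_self ω))).trans hu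
    rw [hφ_apply, hφ_apply] at h
    rw [inner_sub_right]
    linarith
  have hc : c < 0 := by
    have h := Finset.sum_lt_sum_of_nonempty univ_nonempty fun ω _ =>
      mul_lt_mul_of_pos_left (hsep ω) (hQ ω)
    rw [sum_mul_inner_sub_eq_zero hQ1 hQS] at h
    have : ∑ ω, Q ω * (c * (y - f ω)) = c * (y - ∑ ω, Q ω * f ω) := by
      simp_rw [mul_left_comm (Q _) c, ← Finset.mul_sum, mul_sub, Finset.sum_sub_distrib,
        ← Finset.sum_mul, hQ1, one_mul, mul_sub]
    rw [this] at h
    nlinarith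
  refine ⟨c⁻¹ • w, fun ω => ?_⟩
  rw [real_inner_smul_left, inv_mul_eq_div]
  linarith [(lt_div_iff_of_neg hc).2 ((mul_comm c _).subst (hsep ω))]

theorem mem_subhedgingPrices_of_lt_sInf [CompleteSpace V] {y : ℝ}
    (hNA : S₀ ∈ intrinsicInterior ℝ (convexHull ℝ (range S₁)))
    (hy : y < sInf (arbitrageFreePrices S₀ S₁ f)) : y ∈ subhedgingPrices S₀ S₁ f := by
  obtain ⟨y₀, hy₀⟩ := arbitrageFreePrices_nonempty (f := f) hNA
  obtain ⟨x, hx⟩ := subhedgingPrices_nonempty (S₀ := S₀) (S₁ := S₁) (f := f)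
  have hbdd : BddBelow (arbitrageFreePrices S₀ S₁ f) :=
    ⟨x, fun _ => le_of_mem_subhedgingPrices_of_mem_arbitrageFreePrices hx⟩
  have hinf : sInf (arbitrageFreePrices S₀ S₁ f) ≤ y₀ := csInf_le hbdd hy₀
  refine mem_subhedgingPrices_of_notMem_convexHull hy₀ (hy.trans_le hinf) fun hK => ?_
  have hmid := Ioo_subset_arbitrageFreePrices hK hy₀
    (⟨by linarith, by linarith⟩ : (y + sInf (arbitrageFreePrices S₀ S₁ f)) / 2 ∈ Ioo y y₀)
  linarith [csInf_le hbdd hmid]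

end OnePeriodMarket

theorem one_period_lower_price_general {Ω : Type} [Fintype Ω] [Nonempty Ω] {d : ℕ}
    (S₀ : E d) (S₁ : Ω → E d)
    (hNA : S₀ ∈ intrinsicInterior ℝ (convexHull ℝ (Set.range S₁)))
    (f : Ω → ℝ) :
    sSup {x : ℝ | ∃ γ : E d, ∀ ω, x - ⟪γ, S₁ ω - S₀⟫ ≤ f ω} =
      sInf {y : ℝ | (S₀, y) ∈
        intrinsicInterior ℝ (convexHull ℝ (Set.range fun ω => (S₁ ω, f ω)))} ∧
    sSup {x : ℝ | ∃ γ : E d, ∀ ω, x - ⟪γ, S₁ ω - S₀⟫ ≤ f ω} ≤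
      sInf {x : ℝ | ∃ γ : E d, ∀ ω, f ω ≤ x + ⟪γ, S₁ ω - S₀⟫} ∧
    {y : ℝ | ∃ Q : Ω → ℝ, (∀ ω, 0 < Q ω) ∧ (∑ ω, Q ω = 1) ∧
        (∑ ω, Q ω • S₁ ω = S₀) ∧ ∑ ω, Q ω * f ω = y} =
      {y : ℝ | (S₀, y) ∈
        intrinsicInterior ℝ (convexHull ℝ (Set.range fun ω => (S₁ ω, f ω)))} := by
  change sSup (subhedgingPrices S₀ S₁ f) = sInf _ ∧
    sSup (subhedgingPrices S₀ S₁ f) ≤ sInf (superhedgingPrices S₀ S₁ f) ∧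
    arbitrageFreePrices S₀ S₁ f = _
  rw [← arbitrageFreePrices_eq]
  obtain ⟨y₀, hy₀⟩ := arbitrageFreePrices_nonempty (f := f) hNA
  have hSL := subhedgingPrices_nonempty (S₀ := S₀) (S₁ := S₁) (f := f)
  have hSLbdd : BddAbove (subhedgingPrices S₀ S₁ f) :=
    ⟨y₀, fun _ hx => le_of_mem_subhedgingPrices_of_mem_arbitrageFreePrices hx hy₀⟩
  refine ⟨le_antisymm ?_ ?_, ?_, rfl⟩
  · exact le_csInf ⟨y₀, hy₀⟩ fun y hy => csSup_le hSL fun x hx =>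
      le_of_mem_subhedgingPrices_of_mem_arbitrageFreePrices hx hy
  · exact le_of_forall_lt_imp_le_of_dense fun y hy =>
      le_csSup hSLbdd (mem_subhedgingPrices_of_lt_sInf hNA hy)
  · calc sSup (subhedgingPrices S₀ S₁ f) ≤ y₀ := csSup_le hSL fun x hx =>
          le_of_mem_subhedgingPrices_of_mem_arbitrageFreePrices hx hy₀
      _ ≤ sInf (superhedgingPrices S₀ S₁ f) := le_csInf superhedgingPrices_nonempty fun x hx =>
          le_of_mem_arbitrageFreePrices_of_mem_superhedgingPrices hy₀ hx

/-- one-period duality for the lower price, the inequality π̲ ≤ π̄, and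
the identification of the set of arbitrage-free prices of f with
{y : (S_0, y) ∈ ri(conv{(S_1(ω), f(ω))})}. -/
theorem one_period_lower_price {Ω : Type} [Fintype Ω] [Nonempty Ω] {d : ℕ}
    (P : Ω → ℝ) (hP : ∀ ω, 0 < P ω) (hP1 : ∑ ω, P ω = 1)
    (S₀ : E d) (S₁ : Ω → E d)
    (hNA : S₀ ∈ intrinsicInterior ℝ (convexHull ℝ (Set.range S₁)))
    (f : Ω → ℝ) :
    sSup {x : ℝ | ∃ γ : E d, ∀ ω, x - ⟪γ, S₁ ω - S₀⟫ ≤ f ω} =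
      sInf {y : ℝ | (S₀, y) ∈
        intrinsicInterior ℝ (convexHull ℝ (Set.range fun ω => (S₁ ω, f ω)))} ∧
    sSup {x : ℝ | ∃ γ : E d, ∀ ω, x - ⟪γ, S₁ ω - S₀⟫ ≤ f ω} ≤
      sInf {x : ℝ | ∃ γ : E d, ∀ ω, f ω ≤ x + ⟪γ, S₁ ω - S₀⟫} ∧
    {y : ℝ | ∃ Q : Ω → ℝ, (∀ ω, 0 < Q ω) ∧ (∑ ω, Q ω = 1) ∧
        (∑ ω, Q ω • S₁ ω = S₀) ∧ ∑ ω, Q ω * f ω = y} =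
      {y : ℝ | (S₀, y) ∈
        intrinsicInterior ℝ (convexHull ℝ (Set.range fun ω => (S₁ ω, f ω)))} :=
  one_period_lower_price_general S₀ S₁ hNA f
end
end

section
/- Let W_1, …, W_n be nonempty closed convex subsets of ℝ^d and λ_1, …, λ_n > 0 with ∑ λ_i = 1. If η ∈ ri(conv(W_1 ∪ ⋯ ∪ W_n)), then there exist points ξ_i ∈ ri W_i and weights δ_i > 0 with ∑ δ_i = 1, such that η = ∑ δ_i ξ_i, provided the sets W_i are bounded. -/
/-!
Choose `ξ⁰ i ∈ ri (W i)` and put `z = ∑ λ i • ξ⁰ i`, a point of `C = conv (⋃ W i)`. As `η ∈ ri C`,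
the segment from `z` through `η` can be prolonged a little inside `C`, to a point
`η' = ∑ α i • w i` with `w i ∈ W i`; thus `η = a • z + b • η'` with `a, b > 0`. Regrouping index by
index, `η = ∑ δ i • ξ i` with `δ i = b * α i + a * λ i > 0` and `ξ i` on the segment from `w i` to
`ξ⁰ i` with positive weight on `ξ⁰ i`, which places `ξ i` in `ri (W i)`.
-/

open Finset

noncomputable section

section

variable {F : Type*} [NormedAddCommGroup F] [NormedSpace ℝ F] {s : Set F} {x y z : F}

theorem mem_intrinsicInterior_iff_ball :
    x ∈ intrinsicInterior ℝ s ↔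
      x ∈ affineSpan ℝ s ∧ ∃ ε > 0, Metric.ball x ε ∩ affineSpan ℝ s ⊆ s := by
  simp only [mem_intrinsicInterior, mem_interior_iff_mem_nhds, Metric.mem_nhds_iff]
  constructor
  · rintro ⟨x, ⟨ε, hε, hball⟩, rfl⟩
    exact ⟨x.2, ε, hε, fun y ⟨hy, hyA⟩ => hball (show (⟨y, hyA⟩ : affineSpan ℝ s) ∈ _ from hy)⟩
  · rintro ⟨hx, ε, hε, hball⟩
    exact ⟨⟨x, hx⟩, ⟨ε, hε, fun y hy => hball ⟨hy, y.2⟩⟩, rfl⟩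

theorem dist_lineMap_lineMap_left (x y z : F) (t : ℝ) :
    dist (AffineMap.lineMap x y t) (AffineMap.lineMap x z t) = |t| * dist y z := by
  rw [dist_eq_norm, dist_eq_norm, AffineMap.lineMap_apply_module', AffineMap.lineMap_apply_module',
    add_sub_add_right_eq_sub, ← smul_sub, sub_sub_sub_cancel_right, norm_smul, Real.norm_eq_abs]

theorem Convex.lineMap_mem_intrinsicInterior (hs : Convex ℝ s) (hx : x ∈ s)
    (hy : y ∈ intrinsicInterior ℝ s) {t : ℝ} (ht₀ : 0 < t) (ht₁ : t ≤ 1) :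
    AffineMap.lineMap x y t ∈ intrinsicInterior ℝ s := by
  have hxA : x ∈ affineSpan ℝ s := subset_affineSpan ℝ s hx
  obtain ⟨hyA, ε, hε, hball⟩ := mem_intrinsicInterior_iff_ball.1 hy
  refine mem_intrinsicInterior_iff_ball.2
    ⟨AffineMap.lineMap_mem t hxA hyA, t * ε, by positivity, fun w ⟨hw, hwA⟩ => ?_⟩
  set u := AffineMap.lineMap x w t⁻¹
  have hwu : w = AffineMap.lineMap x u t := by
    simp only [u, AffineMap.lineMap_apply_module', smul_add, smul_sub, smul_smul,
      mul_inv_cancel₀ ht₀.ne', one_smul]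
    abel
  have hu : u ∈ s := by
    refine hball ⟨?_, AffineMap.lineMap_mem _ hxA hwA⟩
    rwa [Metric.mem_ball, hwu, dist_lineMap_lineMap_left, abs_of_pos ht₀,
      mul_lt_mul_iff_right₀ ht₀] at hw
  rw [hwu]
  exact hs.lineMap_mem hx hu ⟨ht₀.le, ht₁⟩


open Topology in
theorem exists_mem_openSegment_of_mem_intrinsicInterior (hx : x ∈ intrinsicInterior ℝ s)
    (hz : z ∈ affineSpan ℝ s) : ∃ y ∈ s, x ∈ openSegment ℝ z y := by
  obtain ⟨hxA, ε, hε, hball⟩ := mem_intrinsicInterior_iff_ball.1 hx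
  have hnear : ∀ᶠ t in 𝓝[>] (0 : ℝ), AffineMap.lineMap x z (-t) ∈ Metric.ball x ε := by
    have hlim : Filter.Tendsto (fun t : ℝ => AffineMap.lineMap x z (-t)) (𝓝 0) (𝓝 x) :=
      (AffineMap.lineMap_continuous.comp continuous_neg).tendsto' 0 x (by simp)
    exact (hlim.mono_left nhdsWithin_le_nhds).eventually (Metric.ball_mem_nhds x hε)
  obtain ⟨t, hball_t, ht : 0 < t⟩ := (hnear.and self_mem_nhdsWithin).exists
  refine ⟨_, hball ⟨hball_t, AffineMap.lineMap_mem _ hxA hz⟩, t / (1 + t), 1 / (1 + t),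
    by positivity, by positivity, by field_simp; ring, ?_⟩
  rw [AffineMap.lineMap_apply_module']
  match_scalars <;> field_simp <;> ring

theorem exists_sum_smul_eq_of_mem_convexHull_iUnion {ι : Type*} [Fintype ι] {W : ι → Set F}
    (hne : ∀ i, (W i).Nonempty) (hconv : ∀ i, Convex ℝ (W i))
    (hx : x ∈ convexHull ℝ (⋃ i, W i)) :
    ∃ (α : ι → ℝ) (w : ι → F), (∀ i, 0 ≤ α i) ∧ ∑ i, α i = 1 ∧ (∀ i, w i ∈ W i) ∧
      ∑ i, α i • w i = x := by
  classical
  obtain ⟨κ, _, c, f, hc₀, hc₁, hf, rfl⟩ := mem_convexHull_iff_exists_fintype.1 hx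
  choose g hg using fun k => Set.mem_iUnion.1 (hf k)
  set fiber : ι → Finset κ := fun i => {k | g k = i}
  set α : ι → ℝ := fun i => ∑ k ∈ fiber i, c k
  set w : ι → F := fun i => if 0 < α i then (fiber i).centerMass c f else (hne i).some
  have hα₀ : ∀ i, 0 ≤ α i := fun i => sum_nonneg fun k _ => hc₀ k
  have hw : ∀ i, w i ∈ W i := fun i => by
    by_cases hpos : 0 < α i
    · simp only [w, if_pos hpos]
      exact (hconv i).centerMass_mem (fun k _ => hc₀ k) hpos
        fun k hk => (mem_filter.1 hk).2 ▸ hg k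
    · simpa only [w, if_neg hpos] using (hne i).some_mem
  have hαw : ∀ i, α i • w i = ∑ k ∈ fiber i, c k • f k := fun i => by
    by_cases hpos : 0 < α i
    · rw [show w i = _ from if_pos hpos, centerMass, smul_smul, mul_inv_cancel₀ hpos.ne', one_smul]
    · have hzero := (hα₀ i).antisymm (not_lt.1 hpos)
      have hc_zero : ∀ k ∈ fiber i, c k = 0 :=
        (sum_eq_zero_iff_of_nonneg fun k _ => hc₀ k).1 hzero.symm
      rw [← hzero, zero_smul, sum_eq_zero fun k hk => by rw [hc_zero k hk, zero_smul]]
  exact ⟨α, w, hα₀, (sum_fiberwise univ g c).trans hc₁, hw,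
    (sum_congr rfl fun i _ => hαw i).trans (sum_fiberwise univ g _)⟩

theorem smul_add_smul_eq_smul_lineMap {a b : ℝ} (hab : a + b ≠ 0) (p q : F) :
    a • p + b • q = (a + b) • AffineMap.lineMap p q (b / (a + b)) := by
  rw [AffineMap.lineMap_apply_module]
  match_scalars <;> field_simp
  ring

end

theorem selection_lemma_general {d n : ℕ}
    (W : Fin n → Set (E d))
    (hWne : ∀ i, (W i).Nonempty)
    (hWconv : ∀ i, Convex ℝ (W i))
    (lam : Fin n → ℝ) (hlam : ∀ i, 0 < lam i) (hlam1 : ∑ i, lam i = 1)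
    (η : E d) (hη : η ∈ intrinsicInterior ℝ (convexHull ℝ (⋃ i, W i))) :
    ∃ (ξ : Fin n → E d) (δ : Fin n → ℝ),
      (∀ i, ξ i ∈ intrinsicInterior ℝ (W i)) ∧ (∀ i, 0 < δ i) ∧
      (∑ i, δ i = 1) ∧ η = ∑ i, δ i • ξ i := by
  choose ξ₀ hξ₀ using fun i => (hWne i).intrinsicInterior (hWconv i)
  have hz : ∑ i, lam i • ξ₀ i ∈ convexHull ℝ (⋃ i, W i) :=
    (convex_convexHull ℝ _).sum_mem (fun i _ => (hlam i).le) hlam1 fun i _ =>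
      subset_convexHull ℝ _ (Set.mem_iUnion_of_mem i (intrinsicInterior_subset (hξ₀ i)))
  obtain ⟨η', hη', a, b, ha, hb, hab, rfl⟩ :=
    exists_mem_openSegment_of_mem_intrinsicInterior hη (subset_affineSpan ℝ _ hz)
  obtain ⟨α, w, hα, hα1, hw, rfl⟩ := exists_sum_smul_eq_of_mem_convexHull_iUnion hWne hWconv hη'
  set δ : Fin n → ℝ := fun i => b * α i + a * lam i
  have hδ : ∀ i, 0 < δ i := fun i =>
    add_pos_of_nonneg_of_pos (mul_nonneg hb.le (hα i)) (mul_pos ha (hlam i))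
  refine ⟨fun i => AffineMap.lineMap (w i) (ξ₀ i) (a * lam i / δ i), δ, fun i => ?_, hδ, ?_, ?_⟩
  · exact (hWconv i).lineMap_mem_intrinsicInterior (hw i) (hξ₀ i)
      (div_pos (mul_pos ha (hlam i)) (hδ i))
      ((div_le_one (hδ i)).2 (le_add_of_nonneg_left (mul_nonneg hb.le (hα i))))
  · simp only [δ, sum_add_distrib, ← mul_sum, hα1, hlam1, mul_one, add_comm b, hab]
  · rw [smul_sum, smul_sum, ← sum_add_distrib]
    refine sum_congr rfl fun i _ => ?_
    rw [smul_smul, smul_smul, add_comm, smul_add_smul_eq_smul_lineMap (hδ i).ne']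

/-- if W_1,…,W_n are nonempty compact convex sets and
η ∈ ri(conv(W_1 ∪ ⋯ ∪ W_n)), then η = ∑ δ_i ξ_i with ξ_i ∈ ri W_i, δ_i > 0, ∑ δ_i = 1. -/
theorem selection_lemma {d n : ℕ} (hn : 0 < n)
    (W : Fin n → Set (E d))
    (hWne : ∀ i, (W i).Nonempty) (hWclosed : ∀ i, IsClosed (W i))
    (hWconv : ∀ i, Convex ℝ (W i)) (hWbdd : ∀ i, Bornology.IsBounded (W i))
    (lam : Fin n → ℝ) (hlam : ∀ i, 0 < lam i) (hlam1 : ∑ i, lam i = 1)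
    (η : E d) (hη : η ∈ intrinsicInterior ℝ (convexHull ℝ (⋃ i, W i))) :
    ∃ (ξ : Fin n → E d) (δ : Fin n → ℝ),
      (∀ i, ξ i ∈ intrinsicInterior ℝ (W i)) ∧ (∀ i, 0 < δ i) ∧
      (∑ i, δ i = 1) ∧ η = ∑ i, δ i • ξ i :=
  selection_lemma_general W hWne hWconv lam hlam hlam1 η hη
end
end

section
/- Consistency of prices and pricing functional: let Z = (Z_t)_{t=0}^T be a P-martingale on a finite filtered probability space with Z_t ∈ ri K_t* a.s., and let θ be a self-financing portfolio process (θ_{−1} = 0, θ_t − θ_{t−1} ∈ −K_t a.s.). Then the process (⟨θ_t, Z_t⟩)_{t=0}^T is a P-supermartingale; in particular E_P⟨θ_T, Z_T⟩ ≤ 0. -/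
open Finset Pointwise RealInnerProductSpace

noncomputable section

lemma neg_mem_inner_nonpos {d : ℕ} {K : Set (E d)} {x z : E d}
    (hx : x ∈ -K) (hz : z ∈ dualCone K) : ⟪x, z⟫ ≤ 0 := by
  have hx' : -x ∈ K := Set.mem_neg.mp hx
  have := hz (-x) hx'
  rw [inner_neg_left] at this
  linarith

/-- if Z is a P-martingale with Z_t ∈ ri K_t* a.s. and θ is a
self-financing portfolio, then (⟨θ_t, Z_t⟩) is a P-supermartingale; in particular
E_P⟨θ_T, Z_T⟩ ≤ 0. -/
theorem value_process_supermartingale {Ω : Type} [Fintype Ω] [DecidableEq Ω] [Nonempty Ω]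
    {d : ℕ} (T : ℕ)
    (P : Ω → ℝ) (hP : ∀ ω, 0 < P ω) (hP1 : ∑ ω, P ω = 1)
    (atom : ℕ → Ω → Finset Ω)
    (hmem : ∀ t ω, ω ∈ atom t ω)
    (hpart : ∀ t ω ω', ω' ∈ atom t ω → atom t ω' = atom t ω)
    (hrefine : ∀ t ω, atom (t + 1) ω ⊆ atom t ω)
    (h0 : ∀ ω, atom 0 ω = Finset.univ)
    (hT : ∀ ω, atom T ω = {ω})
    -- adapted bid-ask matrix process and solvency cones
    (π : ℕ → Ω → Fin d → Fin d → ℝ)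
    (hπpos : ∀ t ω i j, 0 < π t ω i j)
    (hπdiag : ∀ t ω i, π t ω i i = 1)
    (hπtri : ∀ t ω i j k, π t ω i j ≤ π t ω i k * π t ω k j)
    (hπadapted : ∀ t ω ω', t ≤ T → ω' ∈ atom t ω → π t ω' = π t ω)
    (K : ℕ → Ω → Set (E d)) (hK : ∀ t ω, K t ω = solvencyCone (π t ω))
    -- Z: strictly consistent price process
    (Z : ℕ → Ω → E d)
    (hZadapted : ∀ t ω ω', t ≤ T → ω' ∈ atom t ω → Z t ω' = Z t ω)
    (hZri : ∀ t ω, t ≤ T → Z t ω ∈ intrinsicInterior ℝ (dualCone (K t ω)))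
    (hZmart : ∀ t ω, t < T →
      (∑ ω' ∈ atom t ω, P ω')⁻¹ • ∑ ω' ∈ atom t ω, P ω' • Z (t + 1) ω' = Z t ω)
    -- θ: self-financing portfolio process, θ_{-1} = 0
    (θ : ℕ → Ω → E d)
    (hθadapted : ∀ t ω ω', t ≤ T → ω' ∈ atom t ω → θ t ω' = θ t ω)
    (hθ0 : ∀ ω, θ 0 ω ∈ -K 0 ω)
    (hθsf : ∀ t ω, t < T → θ (t + 1) ω - θ t ω ∈ -K (t + 1) ω) :
    (∀ t ω, t < T →
      (∑ ω' ∈ atom t ω, P ω')⁻¹ * ∑ ω' ∈ atom t ω, P ω' * ⟪θ (t + 1) ω', Z (t + 1) ω'⟫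
        ≤ ⟪θ t ω, Z t ω⟫) ∧
    ∑ ω, P ω * ⟪θ T ω, Z T ω⟫ ≤ 0 := by
  -- Z t ω is in the dual cone
  have hZdual : ∀ t ω, t ≤ T → Z t ω ∈ dualCone (K t ω) := fun t ω ht =>
    intrinsicInterior_subset (hZri t ω ht)
  -- positive mass of atoms
  have hmass : ∀ t ω, 0 < ∑ ω' ∈ atom t ω, P ω' := fun t ω =>
    Finset.sum_pos (fun ω' _ => hP ω') ⟨ω, hmem t ω⟩
  -- core fiberwise estimate: conditional supermartingale property
  have hcond : ∀ t ω, t < T →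
      ∑ ω' ∈ atom t ω, P ω' * ⟪θ (t + 1) ω', Z (t + 1) ω'⟫
        ≤ (∑ ω' ∈ atom t ω, P ω') * ⟪θ t ω, Z t ω⟫ := by
    intro t ω ht
    have h1 : ∑ ω' ∈ atom t ω, P ω' * ⟪θ (t + 1) ω', Z (t + 1) ω'⟫
        ≤ ∑ ω' ∈ atom t ω, P ω' * ⟪θ t ω, Z (t + 1) ω'⟫ := by
      apply Finset.sum_le_sum
      intro ω' hω'
      have hθeq : θ t ω' = θ t ω := hθadapted t ω ω' ht.le hω'
      have hsf : ⟪θ (t + 1) ω' - θ t ω', Z (t + 1) ω'⟫ ≤ 0 :=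
        neg_mem_inner_nonpos (hθsf t ω' ht) (hZdual (t + 1) ω' ht)
      rw [inner_sub_left, hθeq] at hsf
      have := (hP ω').le
      nlinarith [hsf, (hP ω').le]
    have h2 : ∑ ω' ∈ atom t ω, P ω' * ⟪θ t ω, Z (t + 1) ω'⟫
        = (∑ ω' ∈ atom t ω, P ω') * ⟪θ t ω, Z t ω⟫ := by
      have hm := hZmart t ω ht
      have hS : ∑ ω' ∈ atom t ω, P ω' • Z (t + 1) ω'
          = (∑ ω' ∈ atom t ω, P ω') • Z t ω := by
        rw [← hm, smul_smul, mul_inv_cancel₀ (hmass t ω).ne', one_smul]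
      calc ∑ ω' ∈ atom t ω, P ω' * ⟪θ t ω, Z (t + 1) ω'⟫
          = ⟪θ t ω, ∑ ω' ∈ atom t ω, P ω' • Z (t + 1) ω'⟫ := by
            rw [inner_sum]
            exact Finset.sum_congr rfl fun ω' _ => (real_inner_smul_right _ _ _).symm
        _ = (∑ ω' ∈ atom t ω, P ω') * ⟪θ t ω, Z t ω⟫ := by
            rw [hS, real_inner_smul_right]
    linarith
  constructor
  · intro t ω ht
    have := hcond t ω ht
    have hinv : (0:ℝ) ≤ (∑ ω' ∈ atom t ω, P ω')⁻¹ := (inv_pos.mpr (hmass t ω)).le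
    calc (∑ ω' ∈ atom t ω, P ω')⁻¹ * ∑ ω' ∈ atom t ω, P ω' * ⟪θ (t + 1) ω', Z (t + 1) ω'⟫
        ≤ (∑ ω' ∈ atom t ω, P ω')⁻¹ * ((∑ ω' ∈ atom t ω, P ω') * ⟪θ t ω, Z t ω⟫) :=
          mul_le_mul_of_nonneg_left this hinv
      _ = ⟪θ t ω, Z t ω⟫ := by
          rw [← mul_assoc, inv_mul_cancel₀ (hmass t ω).ne', one_mul]
  · -- induction: expectations are nonincreasing and start nonpositive
    have key : ∀ n, n ≤ T → ∑ ω, P ω * ⟪θ n ω, Z n ω⟫ ≤ 0 := by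
      intro n
      induction n with
      | zero =>
        intro _
        apply Finset.sum_nonpos
        intro ω _
        have h := neg_mem_inner_nonpos (hθ0 ω) (hZdual 0 ω (Nat.zero_le T))
        nlinarith [(hP ω).le]
      | succ n ih =>
        intro hn
        have hnT : n < T := hn
        -- sum over fibers of atom n
        have step : ∑ ω, P ω * ⟪θ (n + 1) ω, Z (n + 1) ω⟫
            ≤ ∑ ω, P ω * ⟪θ n ω, Z n ω⟫ := by
          have hL : ∑ ω, P ω * ⟪θ (n + 1) ω, Z (n + 1) ω⟫
              = ∑ b : Finset Ω, ∑ ω ∈ Finset.univ.filter (fun ω => atom n ω = b),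
                  P ω * ⟪θ (n + 1) ω, Z (n + 1) ω⟫ :=
            (Finset.sum_fiberwise _ _ _).symm
          have hR : ∑ ω, P ω * ⟪θ n ω, Z n ω⟫
              = ∑ b : Finset Ω, ∑ ω ∈ Finset.univ.filter (fun ω => atom n ω = b),
                  P ω * ⟪θ n ω, Z n ω⟫ :=
            (Finset.sum_fiberwise _ _ _).symm
          rw [hL, hR]
          apply Finset.sum_le_sum
          intro b _
          rcases (Finset.univ.filter (fun ω => atom n ω = b)).eq_empty_or_nonempty with he | hne
          · simp [he]
          · obtain ⟨ω₀, hω₀⟩ := hne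
            have hb : atom n ω₀ = b := (Finset.mem_filter.mp hω₀).2
            have hfib : Finset.univ.filter (fun ω => atom n ω = b) = atom n ω₀ := by
              ext ω'
              simp only [Finset.mem_filter, Finset.mem_univ, true_and]
              constructor
              · intro h
                rw [← hb] at h
                have := hmem n ω'
                rw [h] at this
                exact this
              · intro h
                rw [hpart n ω₀ ω' h, hb]
            rw [hfib]
            have h1 := hcond n ω₀ hnT
            have h2 : ∑ ω' ∈ atom n ω₀, P ω' * ⟪θ n ω', Z n ω'⟫
                = (∑ ω' ∈ atom n ω₀, P ω') * ⟪θ n ω₀, Z n ω₀⟫ := by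
              rw [Finset.sum_mul]
              apply Finset.sum_congr rfl
              intro ω' hω'
              rw [hθadapted n ω₀ ω' hnT.le hω', hZadapted n ω₀ ω' hnT.le hω']
            rw [h2]
            exact h1
        linarith [ih hnT.le, step]
    exact key T le_rfl
end
end
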